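/- arXiv:1109.5478 — 11 statements merged into one kernel-verified Lean document; each statement's English description precedes it below -/
import Mathlib

section
/- Let O ⊆ M_d(ℂ) be an operator system, i.e., a ℂ-linear subspace of the d×d complex matrices such that the identity matrix 1 belongs to O and O is closed under conjugate transpose. Then there exists a POVM A with exactly n = dim_ℂ O outcomes such that the ℂ-linear span of {A_1, …, A_n} equals O; moreover, every POVM B whose elements ℂ-span O has at least dim_ℂ O outcomes. -/
/-!
The self-adjoint elements of `O` span it, so `O` has a basis of self-adjoint matrices
`1, H₂, …, Hₙ`. Adding `‖Hᵢ‖ • 1` (operator norm) makes each `Hᵢ` positive semidefinite without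
changing the span, as `1 ∈ O`; scaling these by a small `ε > 0` and completing them by
`1 - ε ∑ᵢ (‖Hᵢ‖ • 1 + Hᵢ)` gives a POVM with `n` outcomes spanning `O`.
-/

open Matrix
open scoped ComplexOrder

def IsPOVM {d n : ℕ} (A : Fin n → Matrix (Fin d) (Fin d) ℂ) : Prop :=
  (∀ j, (A j).PosSemidef) ∧ ∑ j, A j = 1

open Set Submodule Module ComplexStarModule

theorem Submodule.span_setOf_mem_isSelfAdjoint {A : Type*} [AddCommGroup A] [Module ℂ A]
    [StarAddMonoid A] [StarModule ℂ A] (O : Submodule ℂ A) (hO : ∀ x ∈ O, star x ∈ O) :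
    span ℂ {x | x ∈ O ∧ IsSelfAdjoint x} = O := by
  refine le_antisymm (span_le.2 fun x hx => hx.1) fun x hx => ?_
  have hre : (ℜ x : A) ∈ O := by
    rw [realPart_apply_coe]
    exact O.smul_of_tower_mem _ (O.add_mem hx (hO x hx))
  have him : (ℑ x : A) ∈ O := by
    rw [imaginaryPart_apply_coe]
    exact O.smul_mem _ (O.smul_of_tower_mem _ (O.sub_mem hx (hO x hx)))
  rw [← realPart_add_I_smul_imaginaryPart x]
  exact add_mem (subset_span ⟨hre, (ℜ x).2⟩) (smul_mem _ _ (subset_span ⟨him, (ℑ x).2⟩))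

theorem exists_fin_finrank_span_range_eq {K V : Type*} [Field K] [AddCommGroup V] [Module K V]
    [FiniteDimensional K V] {W : Submodule K V} {S : Set V} (hS : span K S = W) {v : V}
    (hv : v ∈ S) (hv₀ : v ≠ 0) :
    ∃ b : Fin (finrank K W) → V, range b ⊆ S ∧ v ∈ range b ∧ span K (range b) = W := by
  subst hS
  obtain ⟨B, hBS, hvB, hSB, hB⟩ := exists_linearIndepOn_id_extension
    (LinearIndepOn.singleton (R := K) (v := id) hv₀) (singleton_subset_iff.2 hv)
  have hspan : span K B = span K S := le_antisymm (span_mono hBS) (span_le.2 hSB)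
  have : Finite B := hB.finite
  have : Fintype B := Fintype.ofFinite B
  have hcard : Fintype.card B = finrank K (span K S) := by
    rw [← hspan, finrank_span_set_eq_card hB, toFinset_card]
  refine ⟨(↑) ∘ (Fintype.equivFinOfCardEq hcard).symm, ?_, ?_, ?_⟩ <;>
    rw [EquivLike.range_comp, Subtype.range_coe]
  exacts [hBS, hvB rfl, hspan]

theorem span_range_eq_of_sum_eq_of_eq_smul {K V ι : Type*} [Field K] [AddCommGroup V]
    [Module K V] [Fintype ι] {A H : ι → V} {u : V} {i₀ : ι} (hH : H i₀ = u)
    (hA : ∑ i, A i = u) {ε : K} (hε : ε ≠ 0) (c : ι → K)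
    (hAH : ∀ i ≠ i₀, A i = ε • (c i • u + H i)) :
    span K (range A) = span K (range H) := by
  classical
  have hu_H : u ∈ span K (range H) := hH ▸ subset_span (mem_range_self i₀)
  have hu_A : u ∈ span K (range A) := hA ▸ sum_mem fun i _ => subset_span (mem_range_self i)
  have hA_H : ∀ i ≠ i₀, A i ∈ span K (range H) := fun i hi =>
    hAH i hi ▸ smul_mem _ _ (add_mem (smul_mem _ _ hu_H) (subset_span (mem_range_self i)))
  refine le_antisymm (span_le.2 ?_) (span_le.2 ?_) <;> rintro _ ⟨i, rfl⟩ <;>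
    rcases eq_or_ne i i₀ with rfl | hi
  · rw [SetLike.mem_coe,
      eq_sub_of_add_eq ((Finset.add_sum_erase _ A (Finset.mem_univ i)).trans hA)]
    exact sub_mem hu_H (sum_mem fun j hj => hA_H j (Finset.ne_of_mem_erase hj))
  · exact hA_H i hi
  · exact hH ▸ hu_A
  · have : H i = ε⁻¹ • A i - c i • u := by
      rw [hAH i hi, inv_smul_smul₀ hε, add_sub_cancel_left]
    rw [this]
    exact sub_mem (smul_mem _ _ (subset_span (mem_range_self i))) (smul_mem _ _ hu_A)

namespace Matrix

variable {n : Type*} [Fintype n] [DecidableEq n]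

open scoped Matrix.Norms.L2Operator

open scoped MatrixOrder in
theorem posSemidef_norm_smul_one_sub {H : Matrix n n ℂ} (hH : IsSelfAdjoint H) :
    ((‖H‖ : ℂ) • 1 - H).PosSemidef := by
  have := hH.le_algebraMap_norm_self
  rw [le_iff, Algebra.algebraMap_eq_smul_one] at this
  simpa only [Complex.coe_smul] using this

theorem posSemidef_norm_smul_one_add {H : Matrix n n ℂ} (hH : IsSelfAdjoint H) :
    ((‖H‖ : ℂ) • 1 + H).PosSemidef := by
  simpa only [norm_neg, sub_neg_eq_add] using posSemidef_norm_smul_one_sub hH.neg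

theorem exists_posSemidef_sum_eq_one_span_eq {ι : Type*} [Fintype ι]
    {H : ι → Matrix n n ℂ} (hH : ∀ i, IsSelfAdjoint (H i)) {i₀ : ι} (h₀ : H i₀ = 1) :
    ∃ A : ι → Matrix n n ℂ, (∀ i, (A i).PosSemidef) ∧ ∑ i, A i = 1 ∧
      span ℂ (range A) = span ℂ (range H) := by
  classical
  set P : ι → Matrix n n ℂ := fun i => (‖H i‖ : ℂ) • 1 + H i
  have hP : ∀ i, (P i).PosSemidef := fun i => posSemidef_norm_smul_one_add (hH i)
  set T := ∑ i ∈ Finset.univ.erase i₀, P i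
  have hT : IsSelfAdjoint T := (posSemidef_sum _ fun i _ => hP i).isHermitian
  set ε : ℝ := (‖T‖ + 1)⁻¹
  have hε : 0 < ε := by positivity
  have hεℂ : (0 : ℂ) ≤ ε := Complex.zero_le_real.2 hε.le
  obtain ⟨A, hA₀, hA⟩ : ∃ A : ι → Matrix n n ℂ,
      A i₀ = 1 - (ε : ℂ) • T ∧ ∀ i ≠ i₀, A i = (ε : ℂ) • P i :=
    ⟨Function.update _ i₀ _, Function.update_self .., fun i hi => Function.update_of_ne hi ..⟩
  have hsum : ∑ i, A i = 1 := by
    rw [← Finset.add_sum_erase _ _ (Finset.mem_univ i₀), hA₀, Finset.smul_sum,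
      Finset.sum_congr rfl fun i hi => hA i (Finset.ne_of_mem_erase hi), sub_add_cancel]
  refine ⟨A, fun i => ?_, hsum,
    span_range_eq_of_sum_eq_of_eq_smul h₀ hsum (by simp [hε.ne']) _ hA⟩
  rcases eq_or_ne i i₀ with rfl | hi
  · have hεT : (ε : ℂ) * (‖T‖ + 1) = 1 := by
      exact_mod_cast inv_mul_cancel₀ (by positivity : ‖T‖ + 1 ≠ 0)
    have : 1 - (ε : ℂ) • T = (ε : ℂ) • ((‖T‖ : ℂ) • 1 - T + 1) := by
      linear_combination (norm := module) -hεT • (1 : Matrix n n ℂ)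
    rw [hA₀, this]
    exact ((posSemidef_norm_smul_one_sub hT).add PosSemidef.one).smul hεℂ
  · rw [hA i hi]
    exact (hP i).smul hεℂ

end Matrix

/-- Every operator system `O ⊆ M_d(ℂ)` (a complex subspace containing `1` and closed under
conjugate transpose) is the span of the elements of a POVM with `dim_ℂ O` outcomes, and any POVM
whose elements span `O` has at least `dim_ℂ O` outcomes. -/
theorem operator_system_povm (d : ℕ) (O : Submodule ℂ (Matrix (Fin d) (Fin d) ℂ))
    (h_one : (1 : Matrix (Fin d) (Fin d) ℂ) ∈ O)
    (h_star : ∀ X ∈ O, Xᴴ ∈ O) :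
    (∃ A : Fin (Module.finrank ℂ O) → Matrix (Fin d) (Fin d) ℂ,
        IsPOVM A ∧ Submodule.span ℂ (Set.range A) = O) ∧
    (∀ (m : ℕ) (B : Fin m → Matrix (Fin d) (Fin d) ℂ),
        IsPOVM B → Submodule.span ℂ (Set.range B) = O → Module.finrank ℂ O ≤ m) := by
  refine ⟨?_, fun m B _ hB => hB ▸ (finrank_range_le_card B).trans_eq (Fintype.card_fin m)⟩
  rcases isEmpty_or_nonempty (Fin d) with hd | hd
  · exact ⟨0, ⟨fun _ => PosSemidef.zero, Subsingleton.elim _ _⟩, Subsingleton.elim _ _⟩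
  obtain ⟨H, hHO, ⟨i₀, hi₀⟩, hH⟩ := exists_fin_finrank_span_range_eq
    (O.span_setOf_mem_isSelfAdjoint h_star) ⟨h_one, .one _⟩ one_ne_zero
  obtain ⟨A, hA, hA_sum, hA_span⟩ :=
    exists_posSemidef_sum_eq_one_span_eq (fun i => (hHO (mem_range_self i)).2) hi₀
  exact ⟨A, ⟨hA, hA_sum⟩, hA_span.trans hH⟩
end

section
/- Let d and r be natural numbers with 1 ≤ r and 2r < d. Then there exists a ℂ-linear subspace B of the d×d complex matrices such that: (a) B is closed under conjugate transpose; (b) every B ∈ B has trace 0; (c) dim_ℂ B = (d−2r)²; and (d) every nonzero B ∈ B has rank at least 2r+1. -/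
/-!
With `n = d - 2r`, a matrix `c ∈ M_n(ℂ)` is encoded as the `d × d` matrix whose `δ`-th diagonal
lists the values at `0, 1, 2, …` of the polynomial whose coefficients are the entries of the
`δ`-th diagonal of `c`; that polynomial has degree `< n - |δ|`. The main diagonal is moreover
reweighted by the coefficients of the `(d - 1)`-st forward difference, so the trace becomes a
`(d - 1)`-st forward difference of a polynomial of degree `< n ≤ d - 1`, which vanishes.
Conjugate transposition commutes with the encoding. On the lowest nonzero diagonal of `c ≠ 0`
the polynomial is nonzero, so it vanishes at fewer than `n - |δ|` of the `d - |δ|` sample points;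
the remaining `≥ d - n + 1 = 2r + 1` nonzero entries sit on the lowest nonzero diagonal of the
encoded matrix and hence on the diagonal of an upper triangular minor. In particular the
encoding is injective, so its image has dimension `n²`.
-/

open Matrix Polynomial Finset

theorem Polynomial.sum_neg_one_pow_mul_choose_mul_eval_eq_zero {R : Type*} [CommRing R]
    {P : R[X]} {m : ℕ} (hP : P.degree < m) :
    ∑ k ∈ range (m + 1), (-1) ^ (m - k) * (m.choose k : R) * P.eval (k : R) = 0 := by
  rcases eq_or_ne P 0 with rfl | hP0
  · simp
  have := congr_fun (fwdDiff_iter_eq_zero_of_degree_lt ((natDegree_lt_iff_degree_lt hP0).2 hP)) 0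
  rw [fwdDiff_iter_eq_sum_shift] at this
  simpa [zsmul_eq_mul] using this

theorem Polynomial.card_sub_natDegree_le_card_filter_eval_natCast_ne_zero {R : Type*}
    [CommRing R] [IsDomain R] [CharZero R] [DecidableEq R] {P : R[X]} (hP : P ≠ 0)
    (s : Finset ℕ) : #s - P.natDegree ≤ #{t ∈ s | P.eval ((t : ℕ) : R) ≠ 0} := by
  have hroots : #{t ∈ s | P.eval ((t : ℕ) : R) = 0} ≤ P.natDegree := by
    rw [← card_image_of_injective _ (Nat.cast_injective (R := R))]
    refine card_le_degree_of_subset_roots fun x hx => ?_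
    obtain ⟨t, ht, rfl⟩ := mem_image.1 hx
    exact (mem_roots hP).2 (mem_filter.1 ht).2
  have := card_filter_add_card_filter_not (s := s) (fun t : ℕ => P.eval (t : R) = 0)
  simp only [← ne_eq] at this
  omega

theorem Matrix.card_le_rank_of_lowest_diagonal {K : Type*} [Field K] {m n : ℕ}
    {ι : Type*} [Fintype ι] [LinearOrder ι]
    (A : Matrix (Fin m) (Fin n) K) (δ : ℤ)
    (hA : ∀ (i : Fin m) (j : Fin n), (j : ℤ) - i < δ → A i j = 0)
    (ρ : ι → Fin m) (κ : ι → Fin n) (hκ : StrictMono κ) (hδ : ∀ l, (κ l : ℤ) - ρ l = δ)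
    (hne : ∀ l, A (ρ l) (κ l) ≠ 0) : Fintype.card ι ≤ A.rank := by
  have htri : (A.submatrix ρ κ).IsUpperTriangular := fun l l' (hll' : l' < l) => by
    have := hκ hll'
    exact hA _ _ (by have := hδ l; have := hδ l'; omega)
  have hdet : (A.submatrix ρ κ).det ≠ 0 := by
    rw [det_of_isUpperTriangular htri]
    exact prod_ne_zero_iff.2 fun l _ => hne l
  calc Fintype.card ι = (A.submatrix ρ κ).rank :=
        (rank_of_isUnit _ ((isUnit_iff_isUnit_det _).2 hdet.isUnit)).symm
    _ ≤ A.rank := rank_submatrix_le A ρ κ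

section DiagPoly

variable {R : Type*} [Semiring R] {n : ℕ}

noncomputable def diagPoly (c : Matrix (Fin n) (Fin n) R) (δ : ℤ) : R[X] :=
  ∑ p : Fin n × Fin n with (p.2 : ℤ) - p.1 = δ, monomial (min (p.1 : ℕ) p.2) (c p.1 p.2)

theorem diagPoly_add (c c' : Matrix (Fin n) (Fin n) R) (δ : ℤ) :
    diagPoly (c + c') δ = diagPoly c δ + diagPoly c' δ := by
  simp only [diagPoly, Matrix.add_apply, map_add, sum_add_distrib]

theorem diagPoly_smul (a : R) (c : Matrix (Fin n) (Fin n) R) (δ : ℤ) :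
    diagPoly (a • c) δ = a • diagPoly c δ := by
  simp only [diagPoly, Matrix.smul_apply, map_smul, smul_sum]

theorem degree_diagPoly_lt (c : Matrix (Fin n) (Fin n) R) (δ : ℤ) :
    (diagPoly c δ).degree < (n - δ.natAbs : ℕ) := by
  rw [← mem_degreeLT]
  refine Submodule.sum_mem _ fun p hp => mem_degreeLT.2 ((degree_monomial_le _ _).trans_lt ?_)
  have := (mem_filter.1 hp).2
  have := p.1.isLt
  have := p.2.isLt
  exact_mod_cast (show min (p.1 : ℕ) p.2 < n - δ.natAbs by omega)

theorem coeff_diagPoly (c : Matrix (Fin n) (Fin n) R) (u v : Fin n) :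
    (diagPoly c ((v : ℤ) - u)).coeff (min (u : ℕ) v) = c u v := by
  rw [diagPoly, finsetSum_coeff, sum_eq_single_of_mem (u, v) (by simp)]
  · simp
  · rintro ⟨u', v'⟩ hp hne
    rw [coeff_monomial, if_neg]
    have hδ : (v' : ℤ) - u' = v - u := (mem_filter.1 hp).2
    contrapose! hne
    simp only [Prod.mk.injEq, Fin.ext_iff] at hne ⊢
    omega

theorem diagPoly_eq_zero (c : Matrix (Fin n) (Fin n) R) (δ : ℤ)
    (hc : ∀ u v : Fin n, (v : ℤ) - u = δ → c u v = 0) : diagPoly c δ = 0 :=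
  sum_eq_zero fun p hp => by rw [hc _ _ (mem_filter.1 hp).2, map_zero]

end DiagPoly

section SampleMatrix

variable {R : Type*} [CommRing R] {n : ℕ}

theorem star_eval_diagPoly [StarRing R] (c : Matrix (Fin n) (Fin n) R) (δ : ℤ) (k : ℕ) :
    star ((diagPoly c δ).eval (k : R)) = (diagPoly cᴴ (-δ)).eval (k : R) := by
  simp only [diagPoly, eval_finsetSum, eval_monomial, star_sum, star_mul', star_pow, star_natCast]
  refine sum_equiv (Equiv.prodComm _ _) (fun p => ?_) (fun p _ => ?_)
  · simp only [mem_filter, mem_univ, true_and, Equiv.prodComm_apply, Prod.fst_swap, Prod.snd_swap]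
    omega
  · simp [min_comm]

noncomputable def diagWeight (d i j : ℕ) : R :=
  if i = j then (-1) ^ (d - 1 - i) * (d - 1).choose i else 1

theorem diagWeight_comm (d i j : ℕ) : diagWeight d j i = (diagWeight d i j : R) := by
  unfold diagWeight
  split_ifs <;> simp_all

theorem star_diagWeight [StarRing R] (d i j : ℕ) :
    star (diagWeight d i j : R) = diagWeight d i j := by
  unfold diagWeight
  split_ifs <;> simp

variable (d : ℕ)

noncomputable def sampleMatrix : Matrix (Fin n) (Fin n) R →ₗ[R] Matrix (Fin d) (Fin d) R where
  toFun c := Matrix.of fun i j =>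
    diagWeight d i j * (diagPoly c ((j : ℤ) - i)).eval ((min (i : ℕ) j : ℕ) : R)
  map_add' c c' := by ext; simp [diagPoly_add, mul_add]
  map_smul' a c := by ext; simp [diagPoly_smul, mul_left_comm]

theorem sampleMatrix_apply (c : Matrix (Fin n) (Fin n) R) (i j : Fin d) :
    sampleMatrix d c i j =
      diagWeight d i j * (diagPoly c ((j : ℤ) - i)).eval ((min (i : ℕ) j : ℕ) : R) :=
  rfl

theorem sampleMatrix_apply_of_diagonal (c : Matrix (Fin n) (Fin n) R) (δ : ℤ) (t : ℕ)
    (hi : t + (-δ).toNat < d) (hj : t + δ.toNat < d) :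
    sampleMatrix d c ⟨_, hi⟩ ⟨_, hj⟩ =
      diagWeight d (t + (-δ).toNat) (t + δ.toNat) * (diagPoly c δ).eval (t : R) := by
  have hδ : ((t + δ.toNat : ℕ) : ℤ) - (t + (-δ).toNat : ℕ) = δ := by omega
  have hmin : min (t + (-δ).toNat) (t + δ.toNat) = t := by omega
  rw [sampleMatrix_apply, Fin.val_mk, Fin.val_mk, hδ, hmin]

theorem sampleMatrix_apply_eq_zero (c : Matrix (Fin n) (Fin n) R) {δ : ℤ}
    (hc : ∀ u v, c u v ≠ 0 → δ ≤ (v : ℤ) - u) {i j : Fin d} (hij : (j : ℤ) - i < δ) :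
    sampleMatrix d c i j = 0 := by
  rw [sampleMatrix_apply, diagPoly_eq_zero c _ fun u v huv => ?_, eval_zero, mul_zero]
  by_contra h
  have := hc u v h
  omega

theorem conjTranspose_sampleMatrix [StarRing R] (c : Matrix (Fin n) (Fin n) R) :
    (sampleMatrix d c)ᴴ = sampleMatrix d cᴴ := by
  ext i j
  rw [conjTranspose_apply, sampleMatrix_apply, sampleMatrix_apply, star_mul', star_diagWeight,
    diagWeight_comm, min_comm, star_eval_diagPoly, neg_sub]

theorem trace_sampleMatrix (hnd : n < d) (c : Matrix (Fin n) (Fin n) R) :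
    (sampleMatrix d c).trace = 0 := by
  have hdeg : (diagPoly c 0).degree < (d - 1 : ℕ) :=
    (degree_diagPoly_lt c 0).trans_le (by simp only [Int.natAbs_zero]; exact_mod_cast (by omega))
  have := sum_neg_one_pow_mul_choose_mul_eval_eq_zero hdeg
  rw [Nat.sub_add_cancel (by omega)] at this
  simpa [trace, sampleMatrix_apply, diagWeight, ← Fin.sum_univ_eq_sum_range] using this

end SampleMatrix

section Rank

variable {K : Type*} [Field K] [CharZero K] {n : ℕ} (d : ℕ)

theorem diagWeight_ne_zero {i : ℕ} (hi : i < d) (j : ℕ) : (diagWeight d i j : K) ≠ 0 := by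
  unfold diagWeight
  split_ifs
  · exact mul_ne_zero (pow_ne_zero _ (neg_ne_zero.2 one_ne_zero))
      (Nat.cast_ne_zero.2 (Nat.choose_pos (by omega)).ne')
  · exact one_ne_zero

theorem le_rank_sampleMatrix (hnd : n ≤ d) {c : Matrix (Fin n) (Fin n) K} (hc : c ≠ 0) :
    d - n + 1 ≤ (sampleMatrix d c).rank := by
  classical
  obtain ⟨⟨u₀, v₀⟩, hc₀, hmin⟩ := exists_min_image {p : Fin n × Fin n | c p.1 p.2 ≠ 0}
    (fun p => (p.2 : ℤ) - p.1) (by simpa [Finset.Nonempty, ← Matrix.ext_iff] using hc)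
  set δ : ℤ := (v₀ : ℤ) - u₀ with hδ
  have hP : diagPoly c δ ≠ 0 := fun h => by
    have := coeff_diagPoly c u₀ v₀
    rw [h, coeff_zero] at this
    exact (mem_filter.1 hc₀).2 this.symm
  have hdeg : (diagPoly c δ).natDegree < n - δ.natAbs :=
    (natDegree_lt_iff_degree_lt hP).2 (degree_diagPoly_lt c δ)
  let S := {t ∈ range (d - δ.natAbs) | (diagPoly c δ).eval ((t : ℕ) : K) ≠ 0}
  have hS : d - n + 1 ≤ #S := by
    have hδn : δ.natAbs < n := by omega
    calc d - n + 1 ≤ #(range (d - δ.natAbs)) - (diagPoly c δ).natDegree := by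
          rw [card_range]; omega
      _ ≤ #S := card_sub_natDegree_le_card_filter_eval_natCast_ne_zero hP _
  have hSd (t : S) : t.1 + δ.natAbs < d := by
    have := (mem_filter.1 t.2).1
    rw [mem_range] at this
    omega
  refine hS.trans ?_
  rw [← Fintype.card_coe]
  refine card_le_rank_of_lowest_diagonal (sampleMatrix d c) δ
    (fun i j => sampleMatrix_apply_eq_zero d c fun u v huv => hmin (u, v) (by simpa using huv))
    (fun t => ⟨t + (-δ).toNat, by have := hSd t; omega⟩)
    (fun t => ⟨t + δ.toNat, by have := hSd t; omega⟩)
    (fun t t' htt' => by simpa using htt') (fun t => by dsimp only; omega)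
    fun t => ?_
  rw [sampleMatrix_apply_of_diagonal]
  exact mul_ne_zero (diagWeight_ne_zero d (by have := hSd t; omega) _) (mem_filter.1 t.2).2

theorem sampleMatrix_injective (hnd : n ≤ d) :
    Function.Injective (sampleMatrix (R := K) (n := n) d) := by
  refine (injective_iff_map_eq_zero _).2 fun c h => ?_
  by_contra hc
  have := le_rank_sampleMatrix d hnd hc
  rw [h, rank_zero] at this
  omega

end Rank

/-- The matrix-subspace construction in the proof of Prop. 5: for `1 ≤ r < d/2` there is a
complex subspace `B` of `d × d` matrices, closed under conjugate transpose, consisting of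
traceless matrices, of dimension `(d - 2r)²`, all of whose nonzero elements have rank at least
`2r + 1`. -/
theorem exists_high_rank_traceless_subspace (d r : ℕ) (hr : 1 ≤ r) (hrd : 2 * r < d) :
    ∃ B : Submodule ℂ (Matrix (Fin d) (Fin d) ℂ),
      (∀ X ∈ B, Xᴴ ∈ B) ∧
      (∀ X ∈ B, X.trace = 0) ∧
      Module.finrank ℂ B = (d - 2 * r) ^ 2 ∧
      (∀ X ∈ B, X ≠ 0 → 2 * r + 1 ≤ X.rank) := by
  refine ⟨LinearMap.range (sampleMatrix (n := d - 2 * r) d), ?_, ?_, ?_, ?_⟩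
  · rintro _ ⟨c, rfl⟩
    exact ⟨cᴴ, (conjTranspose_sampleMatrix d c).symm⟩
  · rintro _ ⟨c, rfl⟩
    exact trace_sampleMatrix d (by omega) c
  · rw [LinearMap.finrank_range_of_inj (sampleMatrix_injective d (by omega)),
      Module.finrank_matrix, Module.finrank_self, Fintype.card_fin, mul_one, sq]
  · rintro _ ⟨c, rfl⟩ hX
    have := le_rank_sampleMatrix d (c := c) (by omega) fun hc => hX (by rw [hc, map_zero])
    omega
end

section
/- Let A be a POVM with n outcomes on ℂ^d. Then A is informationally complete with respect to the set of pure states if and only if every nonzero selfadjoint matrix T ∈ Matrix (Fin d) (Fin d) ℂ satisfying trace(T * A j) = 0 for all j has rank T ≥ 3. -/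
open Matrix
open scoped ComplexOrder

/-- A state on `ℂ^d`: a positive semidefinite matrix with trace 1. -/
def IsState {d : ℕ} (ρ : Matrix (Fin d) (Fin d) ℂ) : Prop :=
  ρ.PosSemidef ∧ ρ.trace = 1

/-- A family of matrices (e.g. a POVM or a collection of selfadjoint operators) is
informationally complete w.r.t. a set `P` of states if the expectation values
`trace (ρ * A j)` separate the points of `P`. -/
def IsIC {d n : ℕ} (A : Fin n → Matrix (Fin d) (Fin d) ℂ)
    (P : Set (Matrix (Fin d) (Fin d) ℂ)) : Prop :=
  ∀ ρ₁ ∈ P, ∀ ρ₂ ∈ P, (∀ j, (ρ₁ * A j).trace = (ρ₂ * A j).trace) → ρ₁ = ρ₂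

/-- The set of pure states on `ℂ^d`: states of rank 1. -/
def PureStates (d : ℕ) : Set (Matrix (Fin d) (Fin d) ℂ) :=
  {ρ | IsState ρ ∧ ρ.rank = 1}

/-!
Two distinct pure states with the same statistics differ by a nonzero Hermitian matrix of rank at
most 2 orthogonal to every `A j`. Conversely, a nonzero Hermitian `T` of rank at most 2 orthogonal
to every `A j` is traceless, since `∑ j, A j = 1`. Its spectral decomposition therefore has exactly
two nonzero eigenvalues `μ` and `-μ`, so `T = μ (|e⟩⟨e| - |f⟩⟨f|)` for orthonormal eigenvectors
`e`, `f`, and the two distinct pure states `|e⟩⟨e|`, `|f⟩⟨f|` have the same statistics.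
-/

namespace Matrix

section Rank

variable {m n K : Type*} [Fintype n] [Field K]

theorem rank_eq_zero_iff {A : Matrix m n K} : A.rank = 0 ↔ A = 0 := by
  classical
  rw [rank, Submodule.finrank_eq_zero, LinearMap.range_eq_bot, ← toLin'_apply',
    LinearEquiv.map_eq_zero_iff]

theorem rank_sub_le (A B : Matrix m n K) : (A - B).rank ≤ A.rank + B.rank := by
  have hlin : (A - B).mulVecLin = A.mulVecLin + -B.mulVecLin := by
    ext; simp [sub_eq_add_neg]
  have hrange : LinearMap.range (A - B).mulVecLin ≤
      LinearMap.range A.mulVecLin ⊔ LinearMap.range B.mulVecLin := by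
    simpa [hlin] using LinearMap.range_add_le A.mulVecLin (-B.mulVecLin)
  exact (Submodule.finrank_mono hrange).trans (Submodule.finrank_add_le_finrank_add_finrank _ _)

end Rank

section RankOneProjection

variable {n 𝕜 : Type*} [Fintype n] [RCLike 𝕜]

theorem trace_vecMulVec_star (v : EuclideanSpace 𝕜 n) :
    (vecMulVec ⇑v (star ⇑v)).trace = (‖v‖ ^ 2 : ℝ) := by
  rw [trace_vecMulVec, ← EuclideanSpace.inner_eq_star_dotProduct, inner_self_eq_norm_sq_to_K]
  norm_cast

theorem vecMulVec_star_ne_of_inner_eq_zero {v w : EuclideanSpace 𝕜 n} (hvw : inner 𝕜 v w = 0)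
    (hw : w ≠ 0) : vecMulVec ⇑v (star ⇑v) ≠ vecMulVec ⇑w (star ⇑w) := by
  intro h
  have hmul := congrArg (· *ᵥ ⇑w) h
  simp only [vecMulVec_mulVec, op_smul_eq_smul, dotProduct_comm (star _),
    ← EuclideanSpace.inner_eq_star_dotProduct, hvw, zero_smul, inner_self_eq_norm_sq_to_K] at hmul
  exact hw (by simpa using smul_eq_zero.mp hmul.symm)

end RankOneProjection

namespace IsHermitian

variable {n 𝕜 : Type*} [Fintype n] [DecidableEq n] [RCLike 𝕜] {A : Matrix n n 𝕜}

theorem eq_sum_eigenvalues_smul_vecMulVec (hA : A.IsHermitian) :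
    A = ∑ i, (hA.eigenvalues i : 𝕜) •
      vecMulVec ⇑(hA.eigenvectorBasis i) (star ⇑(hA.eigenvectorBasis i)) := by
  conv_lhs => rw [hA.spectral_theorem, Unitary.conjStarAlgAut_apply]
  ext j k
  simp only [mul_apply, diagonal_apply, star_apply, eigenvectorUnitary_apply, Matrix.sum_apply,
    smul_apply, vecMulVec_apply, Pi.star_apply, smul_eq_mul, Function.comp_apply, mul_ite,
    mul_zero, Finset.sum_ite_eq', Finset.mem_univ, if_true]
  exact Finset.sum_congr rfl fun i _ => by ring

theorem exists_eq_smul_sub_of_trace_eq_zero_of_rank_le_two (hA : A.IsHermitian)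
    (hA₀ : A ≠ 0) (htr : A.trace = 0) (hrk : A.rank ≤ 2) :
    ∃ i j, i ≠ j ∧ A = (hA.eigenvalues i : 𝕜) •
      (vecMulVec ⇑(hA.eigenvectorBasis i) (star ⇑(hA.eigenvectorBasis i)) -
        vecMulVec ⇑(hA.eigenvectorBasis j) (star ⇑(hA.eigenvectorBasis j))) := by
  set μ := hA.eigenvalues
  set P := fun i => vecMulVec ⇑(hA.eigenvectorBasis i) (star ⇑(hA.eigenvectorBasis i))
  set S := Finset.univ.filter fun i => μ i ≠ 0
  have hcard : S.card = A.rank := by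
    rw [hA.rank_eq_card_non_zero_eigs, Fintype.card_subtype]
  have hsum : A = ∑ i ∈ S, (μ i : 𝕜) • P i := by
    rw [Finset.sum_filter_of_ne fun i _ hi => by simpa using left_ne_zero_of_smul hi]
    exact hA.eq_sum_eigenvalues_smul_vecMulVec
  have htrS : ∑ i ∈ S, (μ i : 𝕜) = 0 := by
    rw [Finset.sum_filter_of_ne fun i _ hi => by simpa using hi, ← hA.trace_eq_sum_eigenvalues]
    exact htr
  have hS : S.Nonempty := by
    rw [Finset.nonempty_iff_ne_empty]
    rintro hS
    exact hA₀ (by rw [hsum, hS, Finset.sum_empty])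
  obtain hS1 | hS2 : S.card = 1 ∨ S.card = 2 := by have := hS.card_pos; omega
  · obtain ⟨a, ha⟩ := Finset.card_eq_one.mp hS1
    have haS : a ∈ S := by simp [ha]
    rw [ha, Finset.sum_singleton] at htrS
    exact absurd (by exact_mod_cast htrS) (Finset.mem_filter.mp haS).2
  · obtain ⟨a, b, hab, hS⟩ := Finset.card_eq_two.mp hS2
    rw [hS, Finset.sum_pair hab] at hsum htrS
    refine ⟨a, b, hab, hsum.trans ?_⟩
    rw [eq_neg_of_add_eq_zero_right htrS, neg_smul, smul_sub, sub_eq_add_neg]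

end IsHermitian

end Matrix

theorem vecMulVec_star_mem_pureStates {d : ℕ} {v : EuclideanSpace ℂ (Fin d)} (hv : ‖v‖ = 1) :
    vecMulVec ⇑v (star ⇑v) ∈ PureStates d := by
  have htr : (vecMulVec ⇑v (star ⇑v)).trace = 1 := by
    rw [trace_vecMulVec_star, hv]; norm_num
  refine ⟨⟨posSemidef_vecMulVec_self_star _, htr⟩, le_antisymm (rank_vecMulVec_le _ _) ?_⟩
  rw [Nat.one_le_iff_ne_zero, Ne, Matrix.rank_eq_zero_iff]
  rintro h
  simp [h] at htr

theorem rank_sub_le_two_of_mem_pureStates {d : ℕ} {ρ₁ ρ₂ : Matrix (Fin d) (Fin d) ℂ}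
    (hρ₁ : ρ₁ ∈ PureStates d) (hρ₂ : ρ₂ ∈ PureStates d) : (ρ₁ - ρ₂).rank ≤ 2 := by
  have h := rank_sub_le ρ₁ ρ₂
  rwa [hρ₁.2, hρ₂.2] at h

/-- Cor. 7 of the paper: a POVM `A` is informationally complete w.r.t. the pure states iff every
nonzero selfadjoint matrix orthogonal (in the Hilbert–Schmidt sense) to all POVM elements has
rank at least 3. -/
theorem pure_state_ic_iff_rank_ge_three (d n : ℕ) (A : Fin n → Matrix (Fin d) (Fin d) ℂ)
    (hA : IsPOVM A) :
    IsIC A (PureStates d) ↔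
      ∀ T : Matrix (Fin d) (Fin d) ℂ, T.IsHermitian → T ≠ 0 →
        (∀ j, (T * A j).trace = 0) → 3 ≤ T.rank := by
  constructor
  · intro hIC T hT hT₀ hTA
    by_contra! hrk
    have htr : T.trace = 0 := by
      rw [← mul_one T, ← hA.2, Finset.mul_sum, trace_sum]
      exact Finset.sum_eq_zero fun j _ => hTA j
    obtain ⟨a, b, hab, hTab⟩ :=
      hT.exists_eq_smul_sub_of_trace_eq_zero_of_rank_le_two hT₀ htr (by omega)
    have hμ := left_ne_zero_of_smul (ne_of_eq_of_ne hTab.symm hT₀)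
    have horth := hT.eigenvectorBasis.orthonormal
    refine vecMulVec_star_ne_of_inner_eq_zero (horth.2 hab) (horth.ne_zero b)
      (hIC _ (vecMulVec_star_mem_pureStates (horth.1 a))
        _ (vecMulVec_star_mem_pureStates (horth.1 b)) fun j => ?_)
    have hj := hTA j
    rw [hTab, smul_mul_assoc, sub_mul, trace_smul, trace_sub, smul_eq_mul, mul_eq_zero] at hj
    exact sub_eq_zero.mp (hj.resolve_left hμ)
  · intro hrk ρ₁ hρ₁ ρ₂ hρ₂ hρ
    by_contra hne
    have h3 := hrk (ρ₁ - ρ₂) (hρ₁.1.1.isHermitian.sub hρ₂.1.1.isHermitian) (sub_ne_zero.mpr hne)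
      fun j => by rw [sub_mul, trace_sub, hρ j, sub_self]
    have h2 := rank_sub_le_two_of_mem_pureStates hρ₁ hρ₂
    omega
end

section
/- Let A be a POVM with n outcomes on ℂ². Then A is informationally complete with respect to the set of pure states on ℂ² if and only if A is informationally complete with respect to the set of all states on ℂ². -/
open Matrix
open scoped ComplexOrder

open Unitary

/-! The difference `σ` of two qubit states is a traceless Hermitian matrix, so its two
eigenvalues are `λ` and `-λ` and the spectral theorem writes `σ = λ (P - Q)` with `P`, `Q` the
(pure) eigenprojections. Equal statistics for the two states means, by linearity of the trace,
equal statistics for `P` and `Q`; informational completeness on pure states then gives `P = Q`,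
hence `σ = 0`. -/

theorem IsIC.mono {d n : ℕ} {A : Fin n → Matrix (Fin d) (Fin d) ℂ}
    {P Q : Set (Matrix (Fin d) (Fin d) ℂ)} (hP : IsIC A P) (hQP : Q ⊆ P) : IsIC A Q :=
  fun ρ₁ h₁ ρ₂ h₂ ↦ hP ρ₁ (hQP h₁) ρ₂ (hQP h₂)

theorem diagonal_single_mem_pureStates {d : ℕ} (i : Fin d) :
    diagonal (Pi.single i 1) ∈ PureStates d := by
  refine ⟨⟨posSemidef_diagonal_iff.mpr fun k ↦ ?_, by simp [trace_diagonal]⟩, ?_⟩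
  · simp [Pi.single_apply, apply_ite]
  · rw [rank_diagonal]
    simp only [ne_eq, Pi.single_apply, ite_eq_right_iff, one_ne_zero, imp_false, not_not]
    exact Fintype.card_subtype_eq i

theorem conjStarAlgAut_mem_pureStates {d : ℕ} (U : unitaryGroup (Fin d) ℂ)
    {ρ : Matrix (Fin d) (Fin d) ℂ} (hρ : ρ ∈ PureStates d) :
    conjStarAlgAut ℂ _ U ρ ∈ PureStates d := by
  obtain ⟨⟨hpsd, htr⟩, hrank⟩ := hρ
  refine ⟨⟨?_, ?_⟩, ?_⟩
  · simpa [star_eq_conjTranspose] using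
      hpsd.mul_mul_conjTranspose_same (U : Matrix (Fin d) (Fin d) ℂ)
  · rw [conjStarAlgAut_apply, trace_mul_cycle, coe_star_mul_self, one_mul, htr]
  · rw [conjStarAlgAut_apply, ← coe_star]
    simp [-isUnit_iff_ne_zero, -coe_star, hrank]

theorem IsIC.of_pureStates {d n : ℕ} {A : Fin n → Matrix (Fin d) (Fin d) ℂ}
    (hdecomp : ∀ σ : Matrix (Fin d) (Fin d) ℂ, σ.IsHermitian → σ.trace = 0 →
      ∃ c : ℝ, ∃ P ∈ PureStates d, ∃ Q ∈ PureStates d, σ = (c : ℂ) • (P - Q))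
    (h : IsIC A (PureStates d)) : IsIC A {ρ | IsState ρ} := by
  intro ρ₁ h₁ ρ₂ h₂ heq
  obtain ⟨c, P, hP, Q, hQ, hσ⟩ := hdecomp (ρ₁ - ρ₂) (h₁.1.1.sub h₂.1.1)
    (by rw [trace_sub, h₁.2, h₂.2, sub_self])
  rw [← sub_eq_zero, hσ]
  rcases eq_or_ne (c : ℂ) 0 with hc | hc
  · rw [hc, zero_smul]
  have hPQ : ∀ j, (P * A j).trace = (Q * A j).trace := fun j ↦ by
    have : (c : ℂ) * ((P * A j).trace - (Q * A j).trace) = 0 := calc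
      _ = ((ρ₁ - ρ₂) * A j).trace := by
        rw [hσ, smul_mul_assoc, sub_mul, trace_smul, trace_sub, smul_eq_mul]
      _ = 0 := by rw [sub_mul, trace_sub, heq j, sub_self]
    exact sub_eq_zero.mp ((mul_eq_zero.mp this).resolve_left hc)
  rw [h P hP Q hQ hPQ, sub_self, smul_zero]

theorem Matrix.IsHermitian.exists_eq_smul_sub_pureStates_of_trace_eq_zero
    {σ : Matrix (Fin 2) (Fin 2) ℂ} (hσ : σ.IsHermitian) (htr : σ.trace = 0) :
    ∃ c : ℝ, ∃ P ∈ PureStates 2, ∃ Q ∈ PureStates 2, σ = (c : ℂ) • (P - Q) := by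
  set e := hσ.eigenvalues
  set U := hσ.eigenvectorUnitary
  have he : (e 1 : ℂ) = -e 0 := by
    rw [hσ.trace_eq_sum_eigenvalues, Fin.sum_univ_two] at htr
    exact eq_neg_of_add_eq_zero_right htr
  refine ⟨e 0, _, conjStarAlgAut_mem_pureStates U (diagonal_single_mem_pureStates 0),
    _, conjStarAlgAut_mem_pureStates U (diagonal_single_mem_pureStates 1), ?_⟩
  have hdiag : diagonal (RCLike.ofReal ∘ e) = (e 0 : ℂ) •
      (diagonal (Pi.single 0 1) - diagonal (Pi.single 1 1) : Matrix (Fin 2) (Fin 2) ℂ) := by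
    ext a b
    fin_cases a <;> fin_cases b <;> simp [he]
  rw [← map_sub, ← map_smul, ← hdiag]
  exact hσ.spectral_theorem

theorem qubit_pure_ic_iff_ic_general (n : ℕ) (A : Fin n → Matrix (Fin 2) (Fin 2) ℂ) :
    IsIC A (PureStates 2) ↔ IsIC A {ρ : Matrix (Fin 2) (Fin 2) ℂ | IsState ρ} :=
  ⟨IsIC.of_pureStates fun _ hσ htr ↦ hσ.exists_eq_smul_sub_pureStates_of_trace_eq_zero htr,
    fun h ↦ h.mono fun _ hρ ↦ hρ.1⟩

/-- The qubit case: a POVM on `ℂ²` is informationally complete w.r.t. the pure states iff it is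
informationally complete w.r.t. all states. -/
theorem qubit_pure_ic_iff_ic (n : ℕ) (A : Fin n → Matrix (Fin 2) (Fin 2) ℂ)
    (hA : IsPOVM A) :
    IsIC A (PureStates 2) ↔ IsIC A {ρ : Matrix (Fin 2) (Fin 2) ℂ | IsState ρ} :=
  qubit_pure_ic_iff_ic_general n A
end

section
/- Let X and Y be selfadjoint matrices in Matrix (Fin 3) (Fin 3) ℂ which are linearly independent over ℝ. Then there exist real numbers s and t, not both zero, such that det(s • X + t • Y) = 0; in other words, the real span of {X, Y} contains a nonzero singular selfadjoint matrix. -/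
open Matrix Real Function

/-!
The determinant of a Hermitian matrix is real, so `F θ = det (cos θ • X + sin θ • Y)` is a
continuous real function; as the determinant is homogeneous of odd degree, `F (θ + π) = -F θ`,
and the intermediate value theorem gives a zero of `F`.
-/

theorem Function.Antiperiodic.exists_eq_zero {α β : Type*} [AddZeroClass α] [TopologicalSpace α]
    [PreconnectedSpace α] [AddCommGroup β] [LinearOrder β] [IsOrderedAddMonoid β]
    [TopologicalSpace β] [OrderClosedTopology β] {f : α → β} {c : α}
    (hf : Antiperiodic f c) (hcont : Continuous f) : ∃ x, f x = 0 := by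
  have hfc : f c = -f 0 := hf.eq
  rcases le_total (f 0) 0 with h | h
  · exact mem_range_of_exists_le_of_exists_ge hcont ⟨0, h⟩ ⟨c, hfc ▸ neg_nonneg.mpr h⟩
  · exact mem_range_of_exists_le_of_exists_ge hcont ⟨c, hfc ▸ neg_nonpos.mpr h⟩ ⟨0, h⟩

namespace Matrix

variable {n 𝕜 : Type*} [Fintype n] [DecidableEq n] [RCLike 𝕜]

theorem IsHermitian.ofReal_re_det {A : Matrix n n 𝕜} (hA : A.IsHermitian) :
    (RCLike.re A.det : 𝕜) = A.det :=
  RCLike.conj_eq_iff_re.mp ((det_conjTranspose A).symm.trans (by rw [hA]))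

theorem det_neg_of_odd_card (hn : Odd (Fintype.card n)) (A : Matrix n n 𝕜) :
    (-A).det = -A.det := by
  rw [det_neg, hn.neg_one_pow, neg_one_mul]

theorem IsHermitian.exists_real_smul_add_smul_det_eq_zero {A B : Matrix n n 𝕜}
    (hA : A.IsHermitian) (hB : B.IsHermitian) (hn : Odd (Fintype.card n)) :
    ∃ s t : ℝ, (s ≠ 0 ∨ t ≠ 0) ∧ (s • A + t • B).det = 0 := by
  set F : ℝ → ℝ := fun θ => RCLike.re (cos θ • A + sin θ • B).det
  have hanti : Antiperiodic F π := fun θ => by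
    simp only [F, cos_add_pi, sin_add_pi, neg_smul, ← neg_add, det_neg_of_odd_card hn, map_neg]
  have hcont : Continuous F := by fun_prop
  obtain ⟨θ, hθ⟩ := hanti.exists_eq_zero hcont
  refine ⟨cos θ, sin θ, ?_, ?_⟩
  · by_contra! h
    simpa [h.1, h.2] using sin_sq_add_cos_sq θ
  · have hherm : (cos θ • A + sin θ • B).IsHermitian :=
      (IsSelfAdjoint.smul (star_trivial _) hA).add (IsSelfAdjoint.smul (star_trivial _) hB)
    rw [← hherm.ofReal_re_det, show RCLike.re (cos θ • A + sin θ • B).det = 0 from hθ,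
      RCLike.ofReal_zero]

end Matrix

theorem exists_singular_in_real_span_general (X Y : Matrix (Fin 3) (Fin 3) ℂ)
    (hX : X.IsHermitian) (hY : Y.IsHermitian) :
    ∃ s t : ℝ, (s ≠ 0 ∨ t ≠ 0) ∧ (s • X + t • Y).det = 0 :=
  hX.exists_real_smul_add_smul_det_eq_zero hY (by decide)

/-- The key step in the proof of Prop. 8: the real span of two ℝ-linearly independent
selfadjoint `3 × 3` complex matrices contains a nonzero singular (selfadjoint) matrix. -/
theorem exists_singular_in_real_span (X Y : Matrix (Fin 3) (Fin 3) ℂ)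
    (hX : X.IsHermitian) (hY : Y.IsHermitian)
    (hind : LinearIndependent ℝ ![X, Y]) :
    ∃ s t : ℝ, (s ≠ 0 ∨ t ≠ 0) ∧ (s • X + t • Y).det = 0 :=
  exists_singular_in_real_span_general X Y hX hY
end

section
/- Let d ≥ 1 and, for each γ ∈ {2, 3, …, 2d}, let C_γ ∈ Matrix (Fin d) (Fin d) ℂ satisfy (indexing entries by k, l ∈ {1, …, d}): (C_γ)_{kl} = 0 whenever k > l (upper triangularity); (C_γ)_{kl} = 0 whenever k + l > γ; and (C_γ)_{kl} ≠ 0 whenever k ≤ l and k + l = γ. If x, y ∈ ℂ^d satisfy ⟨x, C_γ x⟩ = ⟨y, C_γ y⟩ for all γ ∈ {2, …, 2d}, where ⟨u, v⟩ = ∑_k conj(u_k) v_k, then there exists φ ∈ ℝ with y = exp(i φ) • x. -/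
open ComplexConjugate

/-!
Only the upper triangle of `C γ` up to the anti-diagonal `k + l = γ` contributes to
`⟨x, C γ x⟩`, and that anti-diagonal carries nonzero weights. Let `j` be the first index at
which `x` or `y` is nonzero. Walking along row `j` and using the equation for
`γ = j + l` (1-based), every other term on that anti-diagonal either vanishes below row `j` or,
for `j < k ≤ m`, is `conj (x k) * x m = conj (conj (x j) * x k) * (conj (x j) * x m) / |x j|²`,
hence already known. So `conj (x j) * x l = conj (y j) * y l` for all `l`, which forces
`y = c • x` with `|c| = 1`.
-/

lemma eq_zero_of_sum_mul_eq_zero {ι R : Type*} [Fintype ι] [Semiring R] [NoZeroDivisors R]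
    {A D : ι → R} {i : ι} (hsum : ∑ p, A p * D p = 0) (hA : A i ≠ 0)
    (hoff : ∀ p ≠ i, A p * D p = 0) : D i = 0 := by
  rw [Finset.sum_eq_single i (fun p _ hp => hoff p hp) (by simp)] at hsum
  exact (mul_eq_zero.mp hsum).resolve_left hA

lemma conj_mul_eq_of_conj_mul_eq_of_pivot {R : Type*} [CommRing R] [StarRing R] [IsDomain R]
    {a b c a' b' c' : R} (hpiv : conj a * a ≠ 0) (ha : conj a * a = conj a' * a')
    (hb : conj a * b = conj a' * b') (hc : conj a * c = conj a' * c') :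
    conj b * c = conj b' * c' := by
  have hrank : ∀ a b c : R, conj b * c * (conj a * a) = conj (conj a * b) * (conj a * c) := by
    intro a b c
    simp only [map_mul, starRingEnd_self_apply]
    ring
  refine mul_right_cancel₀ hpiv ?_
  rw [hrank, ha, hb, hc, ← hrank]

lemma exists_exp_mul_of_conj_mul_eq {ι : Type*} {x y : ι → ℂ} {j : ι} (hxj : x j ≠ 0)
    (h : ∀ l, conj (x j) * x l = conj (y j) * y l) :
    ∃ φ : ℝ, ∀ l, y l = Complex.exp (Complex.I * φ) * x l := by
  have hnorm : Complex.normSq (x j) = Complex.normSq (y j) := by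
    exact_mod_cast (Complex.normSq_eq_conj_mul_self.trans (h j)).trans
      Complex.normSq_eq_conj_mul_self.symm
  have hyj : y j ≠ 0 := by
    rw [← Complex.normSq_pos] at hxj ⊢
    linarith
  set c := conj (x j) / conj (y j)
  have hc : ‖c‖ = 1 := by
    have : ‖x j‖ = ‖y j‖ := by
      simpa [Complex.normSq_eq_norm_sq, sq_eq_sq₀] using hnorm
    simp [c, this, hyj]
  obtain ⟨φ, hφ⟩ := (Complex.norm_eq_one_iff c).mp hc
  refine ⟨φ, fun l => ?_⟩
  rw [mul_comm Complex.I, hφ, div_mul_eq_mul_div, h l, eq_div_iff (by simpa using hyj)]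
  ring

structure IsJamesFamily (d : ℕ) (C : ℕ → Matrix (Fin d) (Fin d) ℂ) : Prop where
  upper : ∀ γ, 2 ≤ γ → γ ≤ 2 * d → ∀ k l : Fin d, (l : ℕ) < (k : ℕ) → C γ k l = 0
  zero : ∀ γ, 2 ≤ γ → γ ≤ 2 * d → ∀ k l : Fin d,
    γ < ((k : ℕ) + 1) + ((l : ℕ) + 1) → C γ k l = 0
  nonzero : ∀ γ, 2 ≤ γ → γ ≤ 2 * d → ∀ k l : Fin d,
    (k : ℕ) ≤ (l : ℕ) → ((k : ℕ) + 1) + ((l : ℕ) + 1) = γ → C γ k l ≠ 0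

namespace IsJamesFamily

variable {d : ℕ} {C : ℕ → Matrix (Fin d) (Fin d) ℂ} {x y : Fin d → ℂ}

lemma conj_mul_eq_of_forall_antidiagonal_lt (hC : IsJamesFamily d C)
    (h_exp : ∀ γ, 2 ≤ γ → γ ≤ 2 * d →
      ∑ k, ∑ l, conj (x k) * C γ k l * x l = ∑ k, ∑ l, conj (y k) * C γ k l * y l)
    {k₀ l₀ : Fin d} (hkl : (k₀ : ℕ) ≤ l₀)
    (hprev : ∀ k l : Fin d, (k : ℕ) ≤ l → (k : ℕ) + l ≤ k₀ + l₀ → (k, l) ≠ (k₀, l₀) →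
      conj (x k) * x l = conj (y k) * y l) :
    conj (x k₀) * x l₀ = conj (y k₀) * y l₀ := by
  set γ := (k₀ : ℕ) + l₀ + 2
  have hγ : 2 ≤ γ ∧ γ ≤ 2 * d := by omega
  have hsum : ∑ p : Fin d × Fin d,
      C γ p.1 p.2 * (conj (x p.1) * x p.2 - conj (y p.1) * y p.2) = 0 := by
    calc _ = ∑ p : Fin d × Fin d, (conj (x p.1) * C γ p.1 p.2 * x p.2
            - conj (y p.1) * C γ p.1 p.2 * y p.2) := Finset.sum_congr rfl fun _ _ => by ring
      _ = 0 := by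
        rw [Finset.sum_sub_distrib, ← Finset.univ_product_univ, Finset.sum_product,
          Finset.sum_product, h_exp γ hγ.1 hγ.2, sub_self]
  refine sub_eq_zero.mp <| eq_zero_of_sum_mul_eq_zero (i := (k₀, l₀)) hsum
    (hC.nonzero γ hγ.1 hγ.2 k₀ l₀ hkl (by omega)) ?_
  rintro ⟨k, l⟩ hne
  by_cases hlk : (l : ℕ) < k
  · rw [hC.upper γ hγ.1 hγ.2 k l hlk, zero_mul]
  by_cases hnear : (k : ℕ) + l ≤ k₀ + l₀
  · rw [hprev k l (by omega) hnear hne, sub_self, mul_zero]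
  · rw [hC.zero γ hγ.1 hγ.2 k l (by omega), zero_mul]

lemma conj_mul_eq_of_forall_lt_eq_zero (hC : IsJamesFamily d C)
    (h_exp : ∀ γ, 2 ≤ γ → γ ≤ 2 * d →
      ∑ k, ∑ l, conj (x k) * C γ k l * x l = ∑ k, ∑ l, conj (y k) * C γ k l * y l)
    {j : Fin d} (hx : ∀ k : Fin d, (k : ℕ) < j → x k = 0)
    (hy : ∀ k : Fin d, (k : ℕ) < j → y k = 0) (l : Fin d) :
    conj (x j) * x l = conj (y j) * y l := by
  have hbelow : ∀ k l : Fin d, (k : ℕ) < j → conj (x k) * x l = conj (y k) * y l := by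
    intro k l hk
    simp [hx k hk, hy k hk]
  have hjj : conj (x j) * x j = conj (y j) * y j :=
    hC.conj_mul_eq_of_forall_antidiagonal_lt h_exp le_rfl fun k l hkl hsum hne =>
      hbelow k l <| by
        by_contra! hk
        exact hne (by rw [show k = j from Fin.ext (by omega), show l = j from Fin.ext (by omega)])
  by_cases hpiv : x j = 0
  · have hyj : y j = 0 := by simpa [hpiv, eq_comm (a := (0 : ℂ))] using hjj
    simp [hpiv, hyj]
  induction l using WellFoundedLT.induction with
  | _ l ih =>
  rcases lt_or_ge (l : ℕ) j with hl | hjl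
  · simp [hx l hl, hy l hl]
  refine hC.conj_mul_eq_of_forall_antidiagonal_lt h_exp hjl fun k m hkm hsum hne => ?_
  rcases lt_trichotomy (k : ℕ) j with hk | hk | hk
  · exact hbelow k m hk
  · obtain rfl : k = j := Fin.ext hk
    exact ih m (lt_of_le_of_ne (by omega) fun hml => hne (by rw [hml]))
  · exact conj_mul_eq_of_conj_mul_eq_of_pivot (by simpa using hpiv) hjj
      (ih k (by omega)) (ih m (by omega))

end IsJamesFamily

theorem james_lemma_general (d : ℕ)
    (C : ℕ → Matrix (Fin d) (Fin d) ℂ)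
    (h_upper : ∀ γ, 2 ≤ γ → γ ≤ 2 * d → ∀ k l : Fin d, (l : ℕ) < (k : ℕ) → C γ k l = 0)
    (h_zero : ∀ γ, 2 ≤ γ → γ ≤ 2 * d → ∀ k l : Fin d,
      γ < ((k : ℕ) + 1) + ((l : ℕ) + 1) → C γ k l = 0)
    (h_nonzero : ∀ γ, 2 ≤ γ → γ ≤ 2 * d → ∀ k l : Fin d,
      (k : ℕ) ≤ (l : ℕ) → ((k : ℕ) + 1) + ((l : ℕ) + 1) = γ → C γ k l ≠ 0)
    (x y : EuclideanSpace ℂ (Fin d))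
    (h_exp : ∀ γ, 2 ≤ γ → γ ≤ 2 * d →
      ∑ k, ∑ l, (starRingEnd ℂ) (x k) * C γ k l * x l =
      ∑ k, ∑ l, (starRingEnd ℂ) (y k) * C γ k l * y l) :
    ∃ φ : ℝ, y = Complex.exp (Complex.I * φ) • x := by
  have hC : IsJamesFamily d C := ⟨h_upper, h_zero, h_nonzero⟩
  rcases Set.eq_empty_or_nonempty {i | x i ≠ 0 ∨ y i ≠ 0} with hsupp | hsupp
  · have h0 : ∀ i, x i = 0 ∧ y i = 0 := fun i => by
      simpa using Set.eq_empty_iff_forall_notMem.mp hsupp i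
    exact ⟨0, by ext i; simp [(h0 i).1, (h0 i).2]⟩
  obtain ⟨j, hj, hmin⟩ := wellFounded_lt.has_min _ hsupp
  have hbelow : ∀ k : Fin d, (k : ℕ) < j → x k = 0 ∧ y k = 0 := fun k hk => by
    simpa [not_or] using fun h => hmin k h hk
  have hrow := hC.conj_mul_eq_of_forall_lt_eq_zero h_exp (fun k hk => (hbelow k hk).1)
    (fun k hk => (hbelow k hk).2)
  have hxj : x j ≠ 0 := fun hxj => by
    have hyj : y j = 0 := by simpa [hxj, eq_comm (a := (0 : ℂ))] using hrow j
    exact hj.elim (· hxj) (· hyj)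
  obtain ⟨φ, hφ⟩ := exists_exp_mul_of_conj_mul_eq hxj hrow
  exact ⟨φ, by ext l; simpa using hφ l⟩

/-- The key lemma (Eq. (4) of the paper, following James): let `C γ` (for `γ = 2, …, 2d`) be
upper triangular matrices whose entries `(C γ)_{k l}` (with the 1-based indexing `k = k₀ + 1`,
`l = l₀ + 1` for `k₀ l₀ : Fin d`) vanish when `k + l > γ` and are nonzero when `k ≤ l` and
`k + l = γ`. If `⟨x, C γ x⟩ = ⟨y, C γ y⟩` for all such `γ`, then `y = e^{iφ} x` for some real
`φ`. -/
theorem james_lemma (d : ℕ) (hd : 1 ≤ d)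
    (C : ℕ → Matrix (Fin d) (Fin d) ℂ)
    (h_upper : ∀ γ, 2 ≤ γ → γ ≤ 2 * d → ∀ k l : Fin d, (l : ℕ) < (k : ℕ) → C γ k l = 0)
    (h_zero : ∀ γ, 2 ≤ γ → γ ≤ 2 * d → ∀ k l : Fin d,
      γ < ((k : ℕ) + 1) + ((l : ℕ) + 1) → C γ k l = 0)
    (h_nonzero : ∀ γ, 2 ≤ γ → γ ≤ 2 * d → ∀ k l : Fin d,
      (k : ℕ) ≤ (l : ℕ) → ((k : ℕ) + 1) + ((l : ℕ) + 1) = γ → C γ k l ≠ 0)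
    (x y : EuclideanSpace ℂ (Fin d))
    (h_exp : ∀ γ, 2 ≤ γ → γ ≤ 2 * d →
      ∑ k, ∑ l, (starRingEnd ℂ) (x k) * C γ k l * x l =
      ∑ k, ∑ l, (starRingEnd ℂ) (y k) * C γ k l * y l) :
    ∃ φ : ℝ, y = Complex.exp (Complex.I * φ) • x :=
  james_lemma_general d C h_upper h_zero h_nonzero x y h_exp
end

section
/- Let d ≥ 2. For α ∈ {1, …, 2d−2} define X_α ∈ Matrix (Fin d) (Fin d) ℂ by (X_α)_{kl} = 1 if k + l = α + 1 and (X_α)_{kl} = 0 otherwise (entries indexed by k, l ∈ {1, …, d}). For β ∈ {1, …, 2d−3} define Y_β by (Y_β)_{kl} = −i if k + l = β + 2 and k < l, (Y_β)_{kl} = i if k + l = β + 2 and k > l, and (Y_β)_{kl} = 0 otherwise. These 4d−5 matrices are selfadjoint, and for any x, y ∈ ℂ^d with ‖x‖ = ‖y‖, if ⟨x, X_α x⟩ = ⟨y, X_α y⟩ for all α and ⟨x, Y_β x⟩ = ⟨y, Y_β y⟩ for all β, then there exists φ ∈ ℝ with y = exp(i φ) • x. Consequently this collection of 4d−5 selfadjoint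 matrices is informationally complete with respect to the set of pure states on ℂ^d. -/
/-!
With `w(k, l) = 2, 1, 0` according as `k < l`, `k = l`, `k > l` (0-based indices), the matrix
`X_{s+1} + i Y_s` carries `w(k, l)` on the antidiagonal `k + l = s`, so the measurements determine
`Q_s(x) = ∑_{k + l = s} w(k, l) conj(x_k) x_l` for `s ≤ 2d - 3`, besides `‖x‖²`.
Let `K` be the first index with `x_K ≠ 0`. Since `Q_{2k}(y) = |y_k|²` as soon as `y` vanishes
below `k`, `y` also vanishes below `K`, and `|y_K| = |x_K|` (from `Q_{2K}`, or from the norm when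
`K = d - 1`). After multiplying `y` by the phase `conj(y_K / x_K)` we have `y_K = x_K`, and for
`L > K`, if `x` and `y` agree below `L`, then `Q_{K+L}(y) - Q_{K+L}(x) = 2 conj(x_K) (y_L - x_L)`;
so `y = x` by induction. A pure state is `u u*`, with `tr (u u* S) = ⟨u, S u⟩`.
-/

open Matrix
open scoped ComplexOrder

theorem star_dotProduct_mulVec_eq_sum {n R : Type*} [Fintype n] [CommSemiring R] [StarRing R]
    (x : n → R) (M : Matrix n n R) :
    star x ⬝ᵥ (M *ᵥ x) = ∑ k, ∑ l, star (x k) * M k l * x l := by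
  simp [dotProduct, mulVec, Finset.mul_sum, mul_assoc]

theorem star_smul_dotProduct_mulVec_smul {n R : Type*} [Fintype n] [CommSemiring R] [StarRing R]
    (c : R) (x : n → R) (M : Matrix n n R) :
    star (c • x) ⬝ᵥ (M *ᵥ (c • x)) = star c * c * (star x ⬝ᵥ (M *ᵥ x)) := by
  simp only [mulVec_smul, star_smul, smul_dotProduct, dotProduct_smul, smul_eq_mul]
  ring

theorem trace_vecMulVec_mul {n R : Type*} [Fintype n] [CommSemiring R] (u v : n → R)
    (M : Matrix n n R) : (vecMulVec u v * M).trace = v ⬝ᵥ (M *ᵥ u) := by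
  rw [vecMulVec_mul, trace_vecMulVec, dotProduct_comm, dotProduct_mulVec]

theorem Matrix.IsHermitian.exists_eq_vecMulVec_star_of_rank_eq_one {n 𝕜 : Type*} [Fintype n]
    [DecidableEq n] [RCLike 𝕜] {A : Matrix n n 𝕜} (hA : A.IsHermitian) (hrank : A.rank = 1)
    (htr : A.trace = 1) : ∃ v : n → 𝕜, A = vecMulVec v (star v) := by
  obtain ⟨⟨i, _⟩, huniq⟩ := Fintype.card_eq_one_iff.1 (hA.rank_eq_card_non_zero_eigs ▸ hrank)
  have hzero : ∀ j ≠ i, hA.eigenvalues j = 0 := fun j hj =>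
    not_not.1 fun h => hj (congrArg Subtype.val (huniq ⟨j, h⟩))
  have hone : hA.eigenvalues i = 1 := by
    have h := hA.trace_eq_sum_eigenvalues
    rw [htr, Fintype.sum_eq_single i fun j hj => by rw [hzero j hj, RCLike.ofReal_zero]] at h
    exact_mod_cast h.symm
  have hdiag : diagonal (RCLike.ofReal ∘ hA.eigenvalues) =
      vecMulVec (Pi.single i (1 : 𝕜)) (star (Pi.single i 1)) := by
    ext j k
    by_cases hj : j = i <;> by_cases hk : k = i <;>
      simp [diagonal_apply, vecMulVec_apply, hj, hk, eq_comm (a := i), hone, hzero]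
  refine ⟨hA.eigenvectorUnitary *ᵥ Pi.single i 1, ?_⟩
  conv_lhs => rw [hA.spectral_theorem, Unitary.conjStarAlgAut_apply, hdiag]
  rw [mul_vecMulVec, vecMulVec_mul, star_mulVec, star_eq_conjTranspose]

-- `X_α` and `Y_β` of the statement, with the indices `k, l` shifted to start at `0`.
def jamesX (d α : ℕ) : Matrix (Fin d) (Fin d) ℂ :=
  of fun k l => if (k : ℕ) + l + 1 = α then 1 else 0

def jamesY (d β : ℕ) : Matrix (Fin d) (Fin d) ℂ :=
  of fun k l => if (k : ℕ) + l = β ∧ (k : ℕ) < l then -Complex.I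
    else if (k : ℕ) + l = β ∧ (l : ℕ) < k then Complex.I else 0

def upperAntidiag (d s : ℕ) : Matrix (Fin d) (Fin d) ℂ :=
  of fun k l => if (k : ℕ) + l = s then if (k : ℕ) < l then 2 else if (k : ℕ) = l then 1 else 0
    else 0

theorem eq_jamesX {d : ℕ} {X : ℕ → Matrix (Fin d) (Fin d) ℂ}
    (hX : ∀ α, ∀ k l : Fin d,
      X α k l = if ((k : ℕ) + 1) + ((l : ℕ) + 1) = α + 1 then 1 else 0) :
    X = jamesX d := by
  ext α k l
  rw [hX, jamesX, of_apply]
  split_ifs <;> first | rfl | (exfalso; omega)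

theorem eq_jamesY {d : ℕ} {Y : ℕ → Matrix (Fin d) (Fin d) ℂ}
    (hY : ∀ β, ∀ k l : Fin d,
      Y β k l =
        if ((k : ℕ) + 1) + ((l : ℕ) + 1) = β + 2 ∧ (k : ℕ) < (l : ℕ) then -Complex.I
        else if ((k : ℕ) + 1) + ((l : ℕ) + 1) = β + 2 ∧ (l : ℕ) < (k : ℕ) then Complex.I
        else 0) :
    Y = jamesY d := by
  ext β k l
  rw [hY, jamesY, of_apply]
  split_ifs <;> first | rfl | (exfalso; omega)

theorem isHermitian_jamesX (d α : ℕ) : (jamesX d α).IsHermitian := by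
  ext k l
  simp only [conjTranspose_apply, jamesX, of_apply]
  split_ifs <;> first | (exfalso; omega) | simp

theorem isHermitian_jamesY (d β : ℕ) : (jamesY d β).IsHermitian := by
  ext k l
  simp only [conjTranspose_apply, jamesY, of_apply]
  split_ifs <;> first | (exfalso; omega) | simp

theorem jamesY_zero (d : ℕ) : jamesY d 0 = 0 := by
  ext k l
  simp only [jamesY, of_apply, Matrix.zero_apply]
  split_ifs <;> first | rfl | omega

theorem jamesX_add_I_smul_jamesY (d s : ℕ) :
    jamesX d (s + 1) + Complex.I • jamesY d s = upperAntidiag d s := by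
  ext k l
  simp only [jamesX, jamesY, upperAntidiag, Matrix.add_apply, Matrix.smul_apply, of_apply,
    smul_eq_mul]
  split_ifs <;> first | (exfalso; omega) | norm_num

theorem upperAntidiag_forms_eq_of_forms_eq {d : ℕ}
    {S : Fin (4 * d - 5) → Matrix (Fin d) (Fin d) ℂ}
    (hS : ∀ j : Fin (4 * d - 5), S j =
      if (j : ℕ) < 2 * d - 2 then jamesX d ((j : ℕ) + 1) else jamesY d ((j : ℕ) - (2 * d - 2) + 1))
    {x y : Fin d → ℂ} (h : ∀ j, star x ⬝ᵥ (S j *ᵥ x) = star y ⬝ᵥ (S j *ᵥ y))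
    (s : ℕ) (hs : s < 2 * d - 2) :
    star x ⬝ᵥ (upperAntidiag d s *ᵥ x) = star y ⬝ᵥ (upperAntidiag d s *ᵥ y) := by
  have hX : star x ⬝ᵥ (jamesX d (s + 1) *ᵥ x) = star y ⬝ᵥ (jamesX d (s + 1) *ᵥ y) := by
    simpa only [hS, if_pos hs] using h ⟨s, by omega⟩
  have hY : star x ⬝ᵥ (jamesY d s *ᵥ x) = star y ⬝ᵥ (jamesY d s *ᵥ y) := by
    rcases Nat.eq_zero_or_pos s with rfl | hs₀
    · simp only [jamesY_zero, zero_mulVec, dotProduct_zero]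
    · have hj := h ⟨2 * d - 3 + s, by omega⟩
      simp only [hS] at hj
      rwa [if_neg (by omega), show 2 * d - 3 + s - (2 * d - 2) + 1 = s by omega] at hj
  simp only [← jamesX_add_I_smul_jamesY, add_mulVec, smul_mulVec, dotProduct_add,
    dotProduct_smul, hX, hY]

section UpperAntidiagForms

variable {d : ℕ} {x y : Fin d → ℂ}

theorem star_dotProduct_upperAntidiag_two_mul_mulVec {m : Fin d} (hx : ∀ k < m, x k = 0) :
    star x ⬝ᵥ (upperAntidiag d (2 * m) *ᵥ x) = star (x m) * x m := by
  have term : ∀ k l, star (x k) * upperAntidiag d (2 * m) k l * x l =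
      if k = m ∧ l = m then star (x m) * x m else 0 := by
    intro k l
    simp only [upperAntidiag, of_apply]
    rcases lt_trichotomy k m with hk | rfl | hk
    · simp [hx k hk, hk.ne]
    · by_cases hl : l = k
      · subst hl
        simp [two_mul]
      · have : (k : ℕ) + l ≠ 2 * k := fun h => hl (Fin.ext (by omega))
        simp [this, hl]
    · by_cases hs : (k : ℕ) + l = 2 * m
      · have hl : l < m := by rw [Fin.lt_def] at hk ⊢; omega
        simp [hx l hl, hk.ne']
      · simp [hs, hk.ne']
  rw [star_dotProduct_mulVec_eq_sum]
  simp only [term]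
  simp [ite_and]

theorem star_dotProduct_upperAntidiag_mulVec_sub {K L : Fin d} (hKL : K < L)
    (hx : ∀ k < K, x k = 0) (hyx : ∀ k < L, y k = x k) :
    star y ⬝ᵥ (upperAntidiag d (K + L) *ᵥ y) - star x ⬝ᵥ (upperAntidiag d (K + L) *ᵥ x) =
      2 * (star (x K) * (y L - x L)) := by
  have term : ∀ k l, star (y k) * upperAntidiag d (K + L) k l * y l -
      star (x k) * upperAntidiag d (K + L) k l * x l =
      if k = K ∧ l = L then 2 * (star (x K) * (y L - x L)) else 0 := by
    intro k l
    rw [Fin.lt_def] at hKL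
    simp only [upperAntidiag, of_apply]
    by_cases hs : (k : ℕ) + l = K + L
    · rcases lt_trichotomy k K with hk | rfl | hk
      · simp [hx k hk, hyx k (hk.trans (Fin.lt_def.2 hKL)), hk.ne]
      · obtain rfl : l = L := Fin.ext (by omega)
        simp only [hyx k (Fin.lt_def.2 hKL), hKL, and_self, if_true]
        ring
      · rw [Fin.lt_def] at hk
        by_cases hkl : (k : ℕ) ≤ l
        · simp [hyx k (Fin.lt_def.2 (by omega)), hyx l (Fin.lt_def.2 (by omega)),
            (Fin.lt_def.2 hk).ne']
        · simp [hs, (Fin.lt_def.2 hk).ne', show ¬ (k : ℕ) < l by omega,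
            show (k : ℕ) ≠ l by omega]
    · have hne : ¬ (k = K ∧ l = L) := by rintro ⟨rfl, rfl⟩; exact hs rfl
      simp [hs, hne]
  simp only [star_dotProduct_mulVec_eq_sum, ← Finset.sum_sub_distrib, term]
  simp [ite_and]

theorem eq_zero_of_upperAntidiag_forms_eq
    (hQ : ∀ s < 2 * d - 2,
      star x ⬝ᵥ (upperAntidiag d s *ᵥ x) = star y ⬝ᵥ (upperAntidiag d s *ᵥ y))
    {K : Fin d} (hx : ∀ k < K, x k = 0) : ∀ k < K, y k = 0 := by
  intro k
  induction k using WellFoundedLT.induction with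
  | _ k ih =>
    intro hk
    have h := hQ (2 * k) (by rw [Fin.lt_def] at hk; omega)
    rwa [star_dotProduct_upperAntidiag_two_mul_mulVec fun j hj => hx j (hj.trans hk),
      star_dotProduct_upperAntidiag_two_mul_mulVec fun j hj => ih j hj (hj.trans hk),
      hx k hk, star_zero, zero_mul, zero_eq_mul, star_eq_zero, or_self] at h

theorem star_mul_self_eq_of_upperAntidiag_forms_eq (hnorm : star x ⬝ᵥ x = star y ⬝ᵥ y)
    (hQ : ∀ s < 2 * d - 2,
      star x ⬝ᵥ (upperAntidiag d s *ᵥ x) = star y ⬝ᵥ (upperAntidiag d s *ᵥ y))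
    {K : Fin d} (hx : ∀ k < K, x k = 0) (hy : ∀ k < K, y k = 0) :
    star (y K) * y K = star (x K) * x K := by
  by_cases hK : 2 * (K : ℕ) < 2 * d - 2
  · rw [← star_dotProduct_upperAntidiag_two_mul_mulVec hx,
      ← star_dotProduct_upperAntidiag_two_mul_mulVec hy, hQ _ hK]
  · have hlast : ∀ k, k ≠ K → k < K := fun k hk =>
      lt_of_le_of_ne (Fin.le_def.2 (by omega)) hk
    have hsingle : ∀ z : Fin d → ℂ, (∀ k < K, z k = 0) → star z ⬝ᵥ z = star (z K) * z K :=
      fun z hz => Fintype.sum_eq_single K fun k hk => by simp [hz k (hlast k hk)]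
    rw [← hsingle x hx, ← hsingle y hy, hnorm]

theorem eq_of_upperAntidiag_forms_eq
    (hQ : ∀ s < 2 * d - 2,
      star x ⬝ᵥ (upperAntidiag d s *ᵥ x) = star y ⬝ᵥ (upperAntidiag d s *ᵥ y))
    {K : Fin d} (hxK : x K ≠ 0) (hx : ∀ k < K, x k = 0) (hyx : ∀ k ≤ K, y k = x k) : y = x := by
  funext L
  induction L using WellFoundedLT.induction with
  | _ L ih =>
    rcases le_or_gt L K with hLK | hKL
    · exact hyx L hLK
    · have h := star_dotProduct_upperAntidiag_mulVec_sub hKL hx ih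
      rw [← hQ _ (by rw [Fin.lt_def] at hKL; omega), sub_self, zero_eq_mul] at h
      simpa [hxK, sub_eq_zero] using h

theorem exists_norm_eq_one_smul_eq_of_upperAntidiag_forms_eq
    (hnorm : star x ⬝ᵥ x = star y ⬝ᵥ y)
    (hQ : ∀ s < 2 * d - 2,
      star x ⬝ᵥ (upperAntidiag d s *ᵥ x) = star y ⬝ᵥ (upperAntidiag d s *ᵥ y)) :
    ∃ c : ℂ, ‖c‖ = 1 ∧ y = c • x := by
  by_cases hx0 : x = 0
  · rw [hx0, star_zero, zero_dotProduct, eq_comm, dotProduct_star_self_eq_zero] at hnorm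
    exact ⟨1, norm_one, by rw [hnorm, hx0, smul_zero]⟩
  obtain ⟨K, hxK, hK⟩ : ∃ K, x K ≠ 0 ∧ ∀ k < K, x k = 0 := by
    obtain ⟨K, hxK, hmin⟩ := wellFounded_lt.has_min {k | x k ≠ 0} (Function.ne_iff.1 hx0)
    exact ⟨K, hxK, fun k hk => not_not.1 fun hxk => hmin k hxk hk⟩
  have hy := eq_zero_of_upperAntidiag_forms_eq hQ hK
  have hmod := star_mul_self_eq_of_upperAntidiag_forms_eq hnorm hQ hK hy
  set c := y K / x K
  have hc : star c * c = 1 := by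
    rw [star_div₀, div_mul_div_comm, hmod, div_self (mul_ne_zero (star_ne_zero.2 hxK) hxK)]
  refine ⟨c, ?_, ?_⟩
  · have h : (‖c‖ : ℂ) ^ 2 = 1 := (Complex.conj_mul' c).symm.trans hc
    exact (pow_eq_one_iff_of_nonneg (norm_nonneg c) two_ne_zero).1 (by exact_mod_cast h)
  · have hyc : star c • y = x := by
      refine eq_of_upperAntidiag_forms_eq (fun s hs => ?_) hxK hK fun k hk => ?_
      · rw [hQ s hs, star_smul_dotProduct_mulVec_smul, star_star, mul_comm c, hc, one_mul]
      · rcases hk.lt_or_eq with hk | rfl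
        · simp [hK k hk, hy k hk]
        · change star c * y k = x k
          rw [star_div₀, div_mul_eq_mul_div, hmod, mul_div_cancel_left₀ _ (star_ne_zero.2 hxK)]
    rw [← hyc, smul_smul, mul_comm, hc, one_smul]

end UpperAntidiagForms

theorem james_construction_pure_state_ic_general (d : ℕ)
    (X : ℕ → Matrix (Fin d) (Fin d) ℂ)
    (hX : ∀ α, ∀ k l : Fin d,
      X α k l = if ((k : ℕ) + 1) + ((l : ℕ) + 1) = α + 1 then 1 else 0)
    (Y : ℕ → Matrix (Fin d) (Fin d) ℂ)
    (hY : ∀ β, ∀ k l : Fin d,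
      Y β k l =
        if ((k : ℕ) + 1) + ((l : ℕ) + 1) = β + 2 ∧ (k : ℕ) < (l : ℕ) then -Complex.I
        else if ((k : ℕ) + 1) + ((l : ℕ) + 1) = β + 2 ∧ (l : ℕ) < (k : ℕ) then Complex.I
        else 0)
    (S : Fin (4 * d - 5) → Matrix (Fin d) (Fin d) ℂ)
    (hS : ∀ j : Fin (4 * d - 5),
      S j = if (j : ℕ) < 2 * d - 2 then X ((j : ℕ) + 1) else Y ((j : ℕ) - (2 * d - 2) + 1)) :
    (∀ j, (S j).IsHermitian) ∧
    (∀ x y : EuclideanSpace ℂ (Fin d), ‖x‖ = ‖y‖ →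
      (∀ j, ∑ k, ∑ l, (starRingEnd ℂ) (x k) * S j k l * x l =
            ∑ k, ∑ l, (starRingEnd ℂ) (y k) * S j k l * y l) →
      ∃ φ : ℝ, y = Complex.exp (Complex.I * φ) • x) ∧
    IsIC S (PureStates d) := by
  obtain rfl := eq_jamesX hX
  obtain rfl := eq_jamesY hY
  have hsep (x y : Fin d → ℂ) (hnorm : star x ⬝ᵥ x = star y ⬝ᵥ y)
      (h : ∀ j, star x ⬝ᵥ (S j *ᵥ x) = star y ⬝ᵥ (S j *ᵥ y)) : ∃ c : ℂ, ‖c‖ = 1 ∧ y = c • x :=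
    exists_norm_eq_one_smul_eq_of_upperAntidiag_forms_eq hnorm
      (upperAntidiag_forms_eq_of_forms_eq hS h)
  refine ⟨fun j => ?_, fun x y hnorm h => ?_, ?_⟩
  · rw [hS j]
    split_ifs
    exacts [isHermitian_jamesX _ _, isHermitian_jamesY _ _]
  · have hdot (z : EuclideanSpace ℂ (Fin d)) : star z.ofLp ⬝ᵥ z.ofLp = (‖z‖ : ℂ) ^ 2 := by
      rw [dotProduct_comm, ← EuclideanSpace.inner_eq_star_dotProduct, inner_self_eq_norm_sq_to_K]
      norm_cast
    obtain ⟨c, hc, hyx⟩ := hsep x.ofLp y.ofLp (by rw [hdot, hdot, hnorm])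
      (by simpa only [star_dotProduct_mulVec_eq_sum, starRingEnd_apply] using h)
    obtain ⟨φ, rfl⟩ := (Complex.norm_eq_one_iff c).1 hc
    exact ⟨φ, by rw [mul_comm]; exact WithLp.ofLp_injective 2 hyx⟩
  · rintro ρ₁ ⟨⟨hρ₁, htr₁⟩, hrank₁⟩ ρ₂ ⟨⟨hρ₂, htr₂⟩, hrank₂⟩ h
    obtain ⟨u₁, rfl⟩ := hρ₁.isHermitian.exists_eq_vecMulVec_star_of_rank_eq_one hrank₁ htr₁
    obtain ⟨u₂, rfl⟩ := hρ₂.isHermitian.exists_eq_vecMulVec_star_of_rank_eq_one hrank₂ htr₂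
    rw [trace_vecMulVec, dotProduct_comm] at htr₁ htr₂
    simp only [trace_vecMulVec_mul] at h
    obtain ⟨c, hc, rfl⟩ := hsep u₁ u₂ (htr₁.trans htr₂.symm) h
    simp [star_smul, smul_vecMulVec, vecMulVec_smul, smul_smul, Complex.conj_mul', hc]

/-- Prop. 10 of the paper (explicit construction, following James): the `4d - 5` matrices
`X_α` (`α = 1, …, 2d - 2`, with `1`'s on the `α`-th antidiagonal, i.e. `(X_α)_{kl} = 1` iff
`k + l = α + 1` in 1-based indexing) and `Y_β` (`β = 1, …, 2d - 3`, antisymmetric versions with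
entries `∓ i` on the antidiagonal `k + l = β + 2`) are selfadjoint, separate unit vectors up to
a global phase, and form an informationally complete collection w.r.t. the pure states. -/
theorem james_construction_pure_state_ic (d : ℕ) (hd : 2 ≤ d)
    (X : ℕ → Matrix (Fin d) (Fin d) ℂ)
    (hX : ∀ α, ∀ k l : Fin d,
      X α k l = if ((k : ℕ) + 1) + ((l : ℕ) + 1) = α + 1 then 1 else 0)
    (Y : ℕ → Matrix (Fin d) (Fin d) ℂ)
    (hY : ∀ β, ∀ k l : Fin d,
      Y β k l =
        if ((k : ℕ) + 1) + ((l : ℕ) + 1) = β + 2 ∧ (k : ℕ) < (l : ℕ) then -Complex.I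
        else if ((k : ℕ) + 1) + ((l : ℕ) + 1) = β + 2 ∧ (l : ℕ) < (k : ℕ) then Complex.I
        else 0)
    (S : Fin (4 * d - 5) → Matrix (Fin d) (Fin d) ℂ)
    (hS : ∀ j : Fin (4 * d - 5),
      S j = if (j : ℕ) < 2 * d - 2 then X ((j : ℕ) + 1) else Y ((j : ℕ) - (2 * d - 2) + 1)) :
    (∀ j, (S j).IsHermitian) ∧
    (∀ x y : EuclideanSpace ℂ (Fin d), ‖x‖ = ‖y‖ →
      (∀ j, ∑ k, ∑ l, (starRingEnd ℂ) (x k) * S j k l * x l =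
            ∑ k, ∑ l, (starRingEnd ℂ) (y k) * S j k l * y l) →
      ∃ φ : ℝ, y = Complex.exp (Complex.I * φ) • x) ∧
    IsIC S (PureStates d) :=
  james_construction_pure_state_ic_general d X hX Y hY S hS
end

section
/- Let P ∈ Matrix (Fin d) (Fin d) ℂ be an orthogonal projection (P = Pᴴ = P * P) of rank r, and let H ∈ Matrix (Fin d) (Fin d) ℂ be selfadjoint. Then there exist a real number λ > 0 and orthogonal projections Q₁, Q₂ ∈ Matrix (Fin d) (Fin d) ℂ, each of rank r, such that Complex.I • (H * P − P * H) = λ • (Q₁ − Q₂). -/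
/-!
Put `A = i[H, P]` and `S = 2P - 1`. Then `A` is selfadjoint, `S` is a selfadjoint involution and
`SA = -AS`. Choose `c > 0` with `c²` above the spectrum of `A²`, and let `T = S √(c² - A²)`
(continuous functional calculus). Then `T` is selfadjoint, anticommutes with `A`, and
`A² + T² = c²`, so `U± = (±A + T) / c` are selfadjoint involutions, `Q± = (1 + U±) / 2` are
orthogonal projections, and `c (Q₊ - Q₋) = A`. The rank of a projection is its trace, and
`tr Q± = tr P`: indeed `tr A = 0`, and `tr (S g(A²)) = g(0) tr S` for every `g`, because
`g(A²) - g(0) = A² B` with `B` commuting with `A`, while `tr (S A C) = 0` whenever `C` commutes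
with `A`.
-/

open Matrix

theorem mul_self_add_eq_of_anticommute {R : Type*} [NonUnitalRing R] {a b : R}
    (h : a * b = -(b * a)) : (a + b) * (a + b) = a * a + b * b := by
  rw [add_mul, mul_add, mul_add, h]
  abel

theorem two_mul_sub_one_mul_eq_neg_of_mul_add_mul_eq {R : Type*} [Ring R] {p a : R}
    (h : p * a + a * p = a) : (2 * p - 1) * a = -(a * (2 * p - 1)) := by
  rw [eq_neg_iff_add_eq_zero]
  calc (2 * p - 1) * a + a * (2 * p - 1) = 2 * (p * a + a * p) - 2 * a := by noncomm_ring
    _ = 0 := by rw [h, sub_self]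

theorem IsIdempotentElem.mul_commutator_add_commutator_mul {R : Type*} [Ring R] {p : R}
    (hp : IsIdempotentElem p) (x : R) :
    p * (x * p - p * x) + (x * p - p * x) * p = x * p - p * x := by
  have hpx : p * (p * x) = p * x := by rw [← mul_assoc, hp.eq]
  have hxp : x * p * p = x * p := by rw [mul_assoc, hp.eq]
  simp only [mul_sub, sub_mul, hpx, hxp, mul_assoc]
  abel

theorem IsSelfAdjoint.I_smul_mul_sub_mul {R : Type*} [Ring R] [StarRing R] [Module ℂ R]
    [StarModule ℂ R] {a b : R} (ha : IsSelfAdjoint a) (hb : IsSelfAdjoint b) :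
    IsSelfAdjoint (Complex.I • (a * b - b * a)) := by
  rw [IsSelfAdjoint, star_smul, star_sub, star_mul, star_mul, ha.star_eq, hb.star_eq,
    Complex.star_def, Complex.conj_I, neg_smul, ← smul_neg, neg_sub]

theorem IsSelfAdjoint.two_mul_sub_one {R : Type*} [Ring R] [StarRing R] {p : R}
    (hp : IsSelfAdjoint p) : IsSelfAdjoint (2 * p - 1) := by
  simpa only [two_mul] using (hp.add hp).sub (.one R)

theorem IsIdempotentElem.two_mul_sub_one_mul_self {R : Type*} [Ring R] {p : R}
    (hp : IsIdempotentElem p) : (2 * p - 1) * (2 * p - 1) = 1 := by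
  calc (2 * p - 1) * (2 * p - 1) = 4 * (p * p) - 4 * p + 1 := by noncomm_ring
    _ = 1 := by rw [hp.eq, sub_self, zero_add]

theorem inv_two_smul_one_add_two_mul_sub_one {R : Type*} [Ring R] [Algebra ℝ R] (p : R) :
    (2 : ℝ)⁻¹ • (1 + (2 * p - 1)) = p := by
  rw [add_sub_cancel, two_mul, ← two_smul ℝ, smul_smul, inv_mul_cancel₀ two_ne_zero, one_smul]

section StarAlgebra

variable {R : Type*} [Ring R] [StarRing R] [Algebra ℝ R] [StarModule ℝ R]

theorem IsSelfAdjoint.isStarProjection_inv_two_smul_one_add {u : R} (hu : IsSelfAdjoint u)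
    (huu : u * u = 1) : IsStarProjection ((2 : ℝ)⁻¹ • (1 + u)) := by
  refine ⟨?_, (IsSelfAdjoint.all _).smul ((IsSelfAdjoint.one R).add hu)⟩
  have hsq : (1 + u) * (1 + u) = (2 : ℝ) • (1 + u) := by
    simp only [add_mul, mul_add, huu, one_mul, mul_one, two_smul]
    abel
  rw [IsIdempotentElem, smul_mul_smul_comm, hsq, smul_smul, mul_assoc,
    inv_mul_cancel₀ two_ne_zero, mul_one]

theorem isStarProjection_of_anticommute_of_mul_self_add_mul_self {a t : R} {c : ℝ} (hc : c ≠ 0)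
    (ha : IsSelfAdjoint a) (ht : IsSelfAdjoint t) (hat : a * t = -(t * a))
    (hsum : a * a + t * t = algebraMap ℝ R (c ^ 2)) :
    IsStarProjection ((2 : ℝ)⁻¹ • (1 + c⁻¹ • (a + t))) := by
  refine ((IsSelfAdjoint.all c⁻¹).smul (ha.add ht)).isStarProjection_inv_two_smul_one_add ?_
  rw [smul_mul_smul_comm, mul_self_add_eq_of_anticommute hat, hsum,
    Algebra.algebraMap_eq_smul_one, smul_smul]
  field_simp
  simp

end StarAlgebra

theorem BddAbove.exists_pos_forall_le_sq {s : Set ℝ} (hs : BddAbove s) :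
    ∃ c : ℝ, 0 < c ∧ ∀ y ∈ s, y ≤ c ^ 2 := by
  obtain ⟨M, hM⟩ := hs
  refine ⟨max 1 M, by positivity, fun y hy => ?_⟩
  nlinarith [hM hy, le_max_left 1 M, le_max_right 1 M]

theorem cfc_sqrt_const_sub_mul_self {A : Type*} [Ring A] [StarRing A] [Algebra ℝ A]
    [TopologicalSpace A] [ContinuousFunctionalCalculus ℝ A IsSelfAdjoint] {a : A} {c : ℝ}
    (ha : IsSelfAdjoint a) (hc : ∀ y ∈ spectrum ℝ a, y ≤ c) :
    cfc (fun y => √(c - y)) a * cfc (fun y => √(c - y)) a = algebraMap ℝ A c - a := by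
  calc cfc (fun y => √(c - y)) a * cfc (fun y => √(c - y)) a
      = cfc (fun y => √(c - y) * √(c - y)) a := (cfc_mul _ _ a).symm
    _ = cfc (fun y => c - y) a :=
        cfc_congr fun y hy => Real.mul_self_sqrt (sub_nonneg.2 (hc y hy))
    _ = algebraMap ℝ A c - a := by rw [cfc_sub .., cfc_const c a, cfc_id' ℝ a]

namespace Matrix

variable {n 𝕜 : Type*} [Fintype n]

theorem trace_mul_mul_eq_zero_of_anticommute [CommRing 𝕜] [NoZeroDivisors 𝕜] [CharZero 𝕜]
    {S A B : Matrix n n 𝕜} (hSA : S * A = -(A * S)) (hAB : Commute A B) :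
    (S * A * B).trace = 0 := by
  refine self_eq_neg.mp ?_
  calc (S * A * B).trace = (B * (S * A)).trace := trace_mul_comm _ _
    _ = -(B * A * S).trace := by rw [hSA, Matrix.mul_neg, trace_neg, Matrix.mul_assoc]
    _ = -(S * A * B).trace := by rw [← hAB.eq, trace_mul_cycle]

variable [DecidableEq n]

theorem trace_eq_zero_of_mul_self_eq_one_of_anticommute [CommRing 𝕜] [NoZeroDivisors 𝕜]
    [CharZero 𝕜] {S A : Matrix n n 𝕜} (hSS : S * S = 1) (hSA : S * A = -(A * S)) :
    A.trace = 0 := by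
  refine self_eq_neg.mp ?_
  calc A.trace = (S * (S * A)).trace := by rw [← Matrix.mul_assoc, hSS, Matrix.one_mul]
    _ = (S * A * S).trace := trace_mul_comm _ _
    _ = -A.trace := by rw [hSA, Matrix.neg_mul, trace_neg, Matrix.mul_assoc, hSS, Matrix.mul_one]

theorem rank_eq_trace_of_isIdempotentElem [Field 𝕜] {E : Matrix n n 𝕜}
    (hE : IsIdempotentElem E) : (E.rank : 𝕜) = E.trace := by
  have hE' : IsIdempotentElem E.mulVecLin := by
    rw [IsIdempotentElem, Module.End.mul_eq_comp, ← mulVecLin_mul, hE.eq]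
  rw [rank, ← (LinearMap.IsIdempotentElem.isProj_range _ hE').trace, ← trace_toLin'_eq]
  rfl

theorem rank_eq_of_isIdempotentElem_of_trace_eq [Field 𝕜] [CharZero 𝕜] {E F : Matrix n n 𝕜}
    (hE : IsIdempotentElem E) (hF : IsIdempotentElem F) (h : E.trace = F.trace) :
    E.rank = F.rank := by
  exact_mod_cast (rank_eq_trace_of_isIdempotentElem hE).trans
    (h.trans (rank_eq_trace_of_isIdempotentElem hF).symm)

variable [RCLike 𝕜]

theorem trace_mul_cfc_mul_self_of_anticommute {S A : Matrix n n 𝕜} (hA : IsSelfAdjoint A)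
    (hSA : S * A = -(A * S)) (f : ℝ → ℝ) :
    (S * cfc f (A * A)).trace = f 0 • S.trace := by
  have hAA : IsSelfAdjoint (A * A) := (hA.commute_iff hA).1 (.refl A)
  have hcont (g : ℝ → ℝ) : ContinuousOn g (spectrum ℝ (A * A)) :=
    finite_real_spectrum.continuousOn g
  set B := cfc (fun y => (f y - f 0) / y) (A * A)
  have hAB : Commute A B := (Commute.cfc_real ((Commute.refl A).mul_left (.refl A)) _).symm
  have hf : cfc f (A * A) = algebraMap ℝ _ (f 0) + A * (A * B) := by
    calc cfc f (A * A) = cfc (fun y => f 0 + y * ((f y - f 0) / y)) (A * A) := by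
          refine cfc_congr fun y _ => ?_
          rcases eq_or_ne y 0 with rfl | hy
          · simp
          · field_simp; ring
      _ = algebraMap ℝ _ (f 0) + A * (A * B) := by
          rw [cfc_const_add _ _ _ (hcont _), cfc_mul _ _ _ (hcont _) (hcont _), cfc_id' ℝ _,
            Matrix.mul_assoc]
  rw [hf, Matrix.mul_add, trace_add, ← Matrix.mul_assoc,
    trace_mul_mul_eq_zero_of_anticommute hSA ((Commute.refl A).mul_right hAB), add_zero,
    ← Algebra.commutes, ← Algebra.smul_def, trace_smul]

theorem exists_anticommute_mul_self_add_mul_self_eq_algebraMap {S A : Matrix n n 𝕜}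
    (hA : IsSelfAdjoint A) (hS : IsSelfAdjoint S) (hSS : S * S = 1) (hSA : S * A = -(A * S)) :
    ∃ c : ℝ, 0 < c ∧ ∃ T : Matrix n n 𝕜, IsSelfAdjoint T ∧ A * T = -(T * A) ∧
      A * A + T * T = algebraMap ℝ _ (c ^ 2) ∧ T.trace = c • S.trace := by
  obtain ⟨c, hc, hspec⟩ := (finite_real_spectrum (A := A * A)).bddAbove.exists_pos_forall_le_sq
  set F := cfc (fun y => √(c ^ 2 - y)) (A * A)
  have hSAA : Commute S (A * A) := by
    rw [commute_iff_eq, ← Matrix.mul_assoc, hSA, Matrix.neg_mul, Matrix.mul_assoc, hSA,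
      Matrix.mul_neg, neg_neg, Matrix.mul_assoc]
  have hFS : Commute F S := Commute.cfc_real hSAA.symm _
  have hFA : Commute F A := Commute.cfc_real ((Commute.refl A).mul_left (.refl A)) _
  have hFF : F * F = algebraMap ℝ _ (c ^ 2) - A * A :=
    cfc_sqrt_const_sub_mul_self ((hA.commute_iff hA).1 (.refl A)) hspec
  refine ⟨c, hc, S * F, (hS.commute_iff (cfc_predicate _ _)).1 hFS.symm, ?_, ?_, ?_⟩
  · rw [← Matrix.mul_assoc, ← neg_eq_iff_eq_neg.2 hSA, Matrix.neg_mul, Matrix.mul_assoc,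
      ← hFA.eq, Matrix.mul_assoc]
  · rw [Matrix.mul_assoc, ← Matrix.mul_assoc F, hFS.eq, Matrix.mul_assoc, ← Matrix.mul_assoc,
      hSS, Matrix.one_mul, hFF, add_sub_cancel]
  · rw [trace_mul_cfc_mul_self_of_anticommute hA hSA, sub_zero, Real.sqrt_sq hc.le]

theorem exists_isStarProjection_trace_eq_sub_eq_smul {P A : Matrix n n 𝕜}
    (hP : IsStarProjection P) (hA : IsSelfAdjoint A) (hPA : P * A + A * P = A) :
    ∃ c : ℝ, 0 < c ∧ ∃ Q₁ Q₂ : Matrix n n 𝕜,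
      IsStarProjection Q₁ ∧ Q₁.trace = P.trace ∧ IsStarProjection Q₂ ∧ Q₂.trace = P.trace ∧
      A = c • (Q₁ - Q₂) := by
  have hSA := two_mul_sub_one_mul_eq_neg_of_mul_add_mul_eq hPA
  obtain ⟨c, hc, T, hT, hAT, hsum, hT_trace⟩ :=
    exists_anticommute_mul_self_add_mul_self_eq_algebraMap hA
      hP.isSelfAdjoint.two_mul_sub_one hP.isIdempotentElem.two_mul_sub_one_mul_self hSA
  have hA_trace := trace_eq_zero_of_mul_self_eq_one_of_anticommute
    hP.isIdempotentElem.two_mul_sub_one_mul_self hSA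
  have htrace {B : Matrix n n 𝕜} (hB : B.trace = 0) :
      ((2 : ℝ)⁻¹ • (1 + c⁻¹ • (B + T))).trace = P.trace := by
    have hU : (c⁻¹ • (B + T)).trace = (2 * P - 1).trace := by
      rw [trace_smul, trace_add, hB, zero_add, hT_trace, smul_smul, inv_mul_cancel₀ hc.ne',
        one_smul]
    conv_rhs => rw [← inv_two_smul_one_add_two_mul_sub_one P]
    rw [trace_smul, trace_add, hU, trace_smul, trace_add]
  refine ⟨c, hc, _, _,
    isStarProjection_of_anticommute_of_mul_self_add_mul_self hc.ne' hA hT hAT hsum,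
    htrace hA_trace,
    isStarProjection_of_anticommute_of_mul_self_add_mul_self hc.ne' hA.neg hT
      (by rw [Matrix.neg_mul, Matrix.mul_neg, hAT]) (by rw [neg_mul_neg, hsum]),
    htrace (by rw [trace_neg, hA_trace, neg_zero]), ?_⟩
  match_scalars <;> field_simp <;> ring

end Matrix

/-- The key step of Lemma 15 of the paper: for an orthogonal projection `P` of rank `r` and a
selfadjoint matrix `H`, the tangent vector `i[H, P]` is a positive multiple of a difference of
two rank-`r` orthogonal projections. -/
theorem tangent_vector_is_difference_of_projections (d r : ℕ)
    (P H : Matrix (Fin d) (Fin d) ℂ)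
    (hP_herm : P.IsHermitian) (hP_idem : P * P = P) (hP_rank : P.rank = r)
    (hH : H.IsHermitian) :
    ∃ lam : ℝ, 0 < lam ∧
      ∃ Q₁ Q₂ : Matrix (Fin d) (Fin d) ℂ,
        Q₁.IsHermitian ∧ Q₁ * Q₁ = Q₁ ∧ Q₁.rank = r ∧
        Q₂.IsHermitian ∧ Q₂ * Q₂ = Q₂ ∧ Q₂.rank = r ∧
        Complex.I • (H * P - P * H) = lam • (Q₁ - Q₂) := by
  have hP : IsStarProjection P := ⟨hP_idem, hP_herm⟩
  have hPA : P * (Complex.I • (H * P - P * H)) + Complex.I • (H * P - P * H) * P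
      = Complex.I • (H * P - P * H) := by
    rw [mul_smul_comm, smul_mul_assoc, ← smul_add,
      hP.isIdempotentElem.mul_commutator_add_commutator_mul]
  obtain ⟨c, hc, Q₁, Q₂, hQ₁, hQ₁_trace, hQ₂, hQ₂_trace, hA⟩ :=
    exists_isStarProjection_trace_eq_sub_eq_smul hP
      (IsSelfAdjoint.I_smul_mul_sub_mul hH hP_herm) hPA
  refine ⟨c, hc, Q₁, Q₂, hQ₁.isSelfAdjoint, hQ₁.isIdempotentElem, ?_, hQ₂.isSelfAdjoint,
    hQ₂.isIdempotentElem, ?_, hA⟩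
  · rw [← hP_rank]
    exact rank_eq_of_isIdempotentElem_of_trace_eq hQ₁.isIdempotentElem hP_idem hQ₁_trace
  · rw [← hP_rank]
    exact rank_eq_of_isIdempotentElem_of_trace_eq hQ₂.isIdempotentElem hP_idem hQ₂_trace
end

section
/- Let x, y ∈ ℝ³ be unit vectors (with coordinates x₁, x₂, x₃ and y₁, y₂, y₃). If x₁x₂ = y₁y₂, x₂x₃ = y₂y₃, x₃x₁ = y₃y₁, and x₁² − x₂² = y₁² − y₂², then y = x or y = −x. -/
/-!
The data determine the rank-one matrix `x xᵀ`: its off-diagonal entries are given, and writing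
`z = x₁ + i x₂` the data contain `z² = (x₁² - x₂²) + 2i x₁x₂`, hence `|z|² = x₁² + x₂²`; the
normalisation `‖x‖ = 1` then gives `x₃²`. A vector is determined up to sign by `x xᵀ`: cancel a
nonzero coordinate `xᵢ` in `xᵢ xⱼ = yᵢ yⱼ` once `yᵢ = ±xᵢ` is known.
-/

theorem eq_or_eq_neg_of_mul_eq_mul {ι R : Type*} [CommRing R] [NoZeroDivisors R]
    {x y : ι → R} (h : ∀ i j, x i * x j = y i * y j) : y = x ∨ y = -x := by
  by_cases hx : x = 0
  · left
    ext j
    simpa [hx, eq_comm] using h j j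
  obtain ⟨i, hi⟩ := Function.ne_iff.mp hx
  rcases mul_self_eq_mul_self_iff.mp (h i i).symm with hyi | hyi
  · left
    ext j
    exact mul_left_cancel₀ hi (by rw [h, hyi])
  · right
    ext j
    refine mul_left_cancel₀ (neg_ne_zero.mpr hi) ?_
    rw [Pi.neg_apply, neg_mul_neg, ← hyi, ← h]

theorem sq_add_sq_eq_of_mul_eq_of_sq_sub_sq_eq {R : Type*} [CommRing R] [LinearOrder R]
    [IsStrictOrderedRing R] {a b c d : R} (hmul : a * b = c * d)
    (hsub : a ^ 2 - b ^ 2 = c ^ 2 - d ^ 2) : a ^ 2 + b ^ 2 = c ^ 2 + d ^ 2 := by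
  refine (pow_left_inj₀ (by positivity) (by positivity) two_ne_zero).mp ?_
  linear_combination (a ^ 2 - b ^ 2 + c ^ 2 - d ^ 2) * hsub + 4 * (a * b + c * d) * hmul

theorem EuclideanSpace.sum_sq_eq_one_of_norm_eq_one (x : EuclideanSpace ℝ (Fin 3))
    (hx : ‖x‖ = 1) : x 0 ^ 2 + x 1 ^ 2 + x 2 ^ 2 = 1 := by
  rw [← Fin.sum_univ_three (fun i ↦ x i ^ 2), ← EuclideanSpace.real_norm_sq_eq, hx, one_pow]

/-- The embedding of the real projective plane used in Cor. 14 of the paper: unit vectors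
`x, y ∈ ℝ³` with the same values of `x₁x₂, x₂x₃, x₃x₁` and `x₁² - x₂²` agree up to a sign. -/
theorem real_projective_plane_embedding (x y : EuclideanSpace ℝ (Fin 3))
    (hx : ‖x‖ = 1) (hy : ‖y‖ = 1)
    (h12 : x 0 * x 1 = y 0 * y 1)
    (h23 : x 1 * x 2 = y 1 * y 2)
    (h31 : x 2 * x 0 = y 2 * y 0)
    (hsq : x 0 ^ 2 - x 1 ^ 2 = y 0 ^ 2 - y 1 ^ 2) :
    y = x ∨ y = -x := by
  have h01 := sq_add_sq_eq_of_mul_eq_of_sq_sub_sq_eq h12 hsq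
  have hx3 := EuclideanSpace.sum_sq_eq_one_of_norm_eq_one x hx
  have hy3 := EuclideanSpace.sum_sq_eq_one_of_norm_eq_one y hy
  have hmul : ∀ i j, x i * x j = y i * y j := by
    intro i j
    fin_cases i <;> fin_cases j <;> dsimp <;> linarith
  rcases eq_or_eq_neg_of_mul_eq_mul hmul with h | h
  · exact Or.inl (WithLp.ofLp_injective 2 h)
  · exact Or.inr (WithLp.ofLp_injective 2 h)
end

section
/- For every triple S₁, S₂, S₃ of selfadjoint matrices in Matrix (Fin 3) (Fin 3) ℂ, there exist unit vectors x, y ∈ ℝ³, with y ≠ x and y ≠ −x, such that, regarding x and y as vectors in ℂ³ with real entries, ⟨x, S_j x⟩ = ⟨y, S_j y⟩ for j = 1, 2, 3. In other words, no collection of 3 selfadjoint operators is informationally complete with respect to the set of pure states on ℂ³ with real amplitudes (i.e., pure states arising from unit vectors in ℂ³ all of whose coordinates are real). -/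
open Matrix
open scoped ComplexOrder

/-!
For a real vector `x`, `⟨x, S x⟩ = ∑ k l, (Re S)ₖₗ xₖ xₗ` is the Frobenius pairing of `Re S` with
`x xᵀ`. So it suffices to find orthonormal `x, y ∈ ℝ³` with `x xᵀ - y yᵀ` orthogonal to
`Re S₁, Re S₂, Re S₃`. The traceless symmetric `3 × 3` matrices form a `5`-dimensional space, so
those orthogonal to the three `Re Sⱼ` form a space of dimension at least `2`; the determinant is
odd on it, so by the intermediate value theorem along a half circle it vanishes at some `B ≠ 0`.
Such a `B` has eigenvalues `0, c, -c` with `c ≠ 0`, i.e. `B = c (x xᵀ - y yᵀ)` for orthonormal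
eigenvectors `x, y`. Then `y ≠ ±x`, and the projections onto `x` and `y` are distinct real pure
states with the same expectation values.
-/

open ComplexConjugate Module

theorem Matrix.IsHermitian.apply_eq_sum_eigenvalues_mul {n : Type*} [Fintype n] [DecidableEq n]
    {B : Matrix n n ℝ} (hB : B.IsHermitian) (k l : n) :
    B k l = ∑ i, hB.eigenvalues i * (hB.eigenvectorBasis i k * hB.eigenvectorBasis i l) := by
  conv_lhs => rw [hB.spectral_theorem]
  simp only [RCLike.ofReal_real_eq_id, CompTriple.comp_eq, Unitary.conjStarAlgAut_apply, mul_apply,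
    eigenvectorUnitary_apply, diagonal_apply, mul_ite, mul_zero, Finset.sum_ite_eq',
    Finset.mem_univ, ↓reduceIte, star_apply, star_trivial]
  exact Finset.sum_congr rfl fun _ _ => by ring

theorem Matrix.IsHermitian.exists_eq_smul_sub_of_trace_eq_zero_of_det_eq_zero
    {B : Matrix (Fin 3) (Fin 3) ℝ} (hB : B.IsHermitian) (htr : B.trace = 0) (hdet : B.det = 0)
    (hB0 : B ≠ 0) :
    ∃ (c : ℝ) (x y : EuclideanSpace ℝ (Fin 3)), c ≠ 0 ∧ ‖x‖ = 1 ∧ ‖y‖ = 1 ∧ inner ℝ x y = 0 ∧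
      ∀ k l, B k l = c * (x k * x l - y k * y l) := by
  set d := hB.eigenvalues
  set u := hB.eigenvectorBasis
  have hsum : ∑ i, d i = 0 := by simpa [htr] using hB.trace_eq_sum_eigenvalues.symm
  have hprod : ∏ i, d i = 0 := by simpa [hdet] using hB.det_eq_prod_eigenvalues.symm
  obtain ⟨i, -, hi⟩ := Finset.prod_eq_zero_iff.mp hprod
  have hsum_rotate (f : Fin 3 → ℝ) : ∑ j, f j = f i + f (i + 1) + f (i + 2) := by
    rw [← Equiv.sum_comp (Equiv.addLeft i), Fin.sum_univ_three]
    simp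
  have hd₂ : d (i + 2) = -d (i + 1) := by linarith [hsum_rotate d]
  have hd₁ : d (i + 1) ≠ 0 := by
    intro h
    refine hB0 (hB.eigenvalues_eq_zero_iff.mp (funext fun j => ?_))
    rw [Pi.zero_apply]
    obtain rfl | rfl | rfl : j = i ∨ j = i + 1 ∨ j = i + 2 :=
      (by decide : ∀ a b : Fin 3, b = a ∨ b = a + 1 ∨ b = a + 2) i j
    exacts [hi, h, hd₂.trans (by rw [h, neg_zero])]
  refine ⟨d (i + 1), u (i + 1), u (i + 2), hd₁, u.orthonormal.1 _, u.orthonormal.1 _,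
    u.orthonormal.2 ((add_right_injective i).ne (by decide)), fun k l => ?_⟩
  rw [hB.apply_eq_sum_eigenvalues_mul, hsum_rotate]
  linear_combination (u i k * u i l) * hi + (u (i + 2) k * u (i + 2) l) * hd₂

theorem exists_ne_zero_apply_eq_zero_of_odd {E : Type*} [AddCommGroup E] [Module ℝ E]
    [TopologicalSpace E] [IsTopologicalAddGroup E] [ContinuousSMul ℝ E]
    (hE : 1 < finrank ℝ E) {f : E → ℝ} (hf : Continuous f) (hodd : ∀ v, f (-v) = -f v) :
    ∃ v : E, v ≠ 0 ∧ f v = 0 := by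
  have : Nontrivial E := Module.nontrivial_of_finrank_pos (zero_lt_one.trans hE)
  obtain ⟨v₀, hv₀⟩ := exists_ne (0 : E)
  obtain ⟨v₁, hv⟩ := exists_linearIndependent_pair_of_one_lt_finrank hE hv₀
  set g : ℝ → ℝ := fun θ => f (Real.cos θ • v₀ + Real.sin θ • v₁)
  have hgπ : g Real.pi = -g 0 := by simp [g, hodd]
  have hg0 : (0 : ℝ) ∈ Set.uIcc (g 0) (g Real.pi) := by
    rw [hgπ, Set.mem_uIcc]
    rcases le_total 0 (g 0) with h | h <;> [right; left] <;> constructor <;> linarith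
  obtain ⟨θ, -, hθ⟩ := intermediate_value_uIcc (by fun_prop) hg0
  refine ⟨_, fun h => ?_, hθ⟩
  obtain ⟨hcos, hsin⟩ := LinearIndependent.pair_iff.mp hv _ _ h
  simpa [hcos, hsin] using Real.sin_sq_add_cos_sq θ

section Constraints

variable {ι : Type*}

/-- The last component is the axial vector of `B - Bᵀ`. -/
noncomputable def constraintMap (A : ι → Matrix (Fin 3) (Fin 3) ℝ) :
    Matrix (Fin 3) (Fin 3) ℝ →ₗ[ℝ] (ι → ℝ) × ℝ × (Fin 3 → ℝ) where
  toFun B := (fun j => ∑ k, ∑ l, A j k l * B k l, B.trace,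
    fun i => B (i + 1) (i + 2) - B (i + 2) (i + 1))
  map_add' B C := by
    ext <;> simp [Finset.sum_add_distrib, mul_add, add_sub_add_comm]
  map_smul' c B := by
    ext <;> simp [Finset.mul_sum, mul_left_comm, mul_sub]

theorem mem_ker_constraintMap {A : ι → Matrix (Fin 3) (Fin 3) ℝ} {B : Matrix (Fin 3) (Fin 3) ℝ} :
    B ∈ LinearMap.ker (constraintMap A) ↔
      (∀ j, ∑ k, ∑ l, A j k l * B k l = 0) ∧ B.trace = 0 ∧ B.IsHermitian := by
  simp only [LinearMap.mem_ker, constraintMap, LinearMap.coe_mk, AddHom.coe_mk, Prod.mk_eq_zero,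
    funext_iff, Pi.zero_apply, sub_eq_zero]
  refine and_congr_right' (and_congr_right' ?_)
  rw [Matrix.IsHermitian.ext_iff]
  simp only [Fin.forall_fin_succ, Fin.succ_zero_eq_one, Fin.succ_one_eq_two, Fin.isValue,
    IsEmpty.forall_iff, and_true, star_trivial]
  grind

theorem two_le_finrank_ker_constraintMap [Fintype ι] (A : ι → Matrix (Fin 3) (Fin 3) ℝ)
    (hι : Fintype.card ι ≤ 3) : 2 ≤ finrank ℝ (LinearMap.ker (constraintMap A)) := by
  have h := (constraintMap A).finrank_range_add_finrank_ker
  have := Submodule.finrank_le (LinearMap.range (constraintMap A))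
  simp [Module.finrank_matrix] at h this
  omega

theorem exists_isHermitian_det_eq_zero_of_card_le_three [Fintype ι]
    (A : ι → Matrix (Fin 3) (Fin 3) ℝ) (hι : Fintype.card ι ≤ 3) :
    ∃ B : Matrix (Fin 3) (Fin 3) ℝ, B ≠ 0 ∧ B.IsHermitian ∧ B.trace = 0 ∧ B.det = 0 ∧
      ∀ j, ∑ k, ∑ l, A j k l * B k l = 0 := by
  obtain ⟨⟨B, hBK⟩, hB0, hdet⟩ := exists_ne_zero_apply_eq_zero_of_odd
    (two_le_finrank_ker_constraintMap A hι)
    (f := fun B : LinearMap.ker (constraintMap A) => (B : Matrix (Fin 3) (Fin 3) ℝ).det)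
    (by fun_prop) (fun B => by norm_num [Matrix.det_neg])
  obtain ⟨hA, htr, hB⟩ := mem_ker_constraintMap.mp hBK
  exact ⟨B, by simpa using hB0, hB, htr, hdet, hA⟩

theorem exists_orthonormal_pair_sum_mul_eq [Fintype ι]
    (A : ι → Matrix (Fin 3) (Fin 3) ℝ) (hι : Fintype.card ι ≤ 3) :
    ∃ x y : EuclideanSpace ℝ (Fin 3), ‖x‖ = 1 ∧ ‖y‖ = 1 ∧ inner ℝ x y = 0 ∧
      ∀ j, ∑ k, ∑ l, A j k l * (x k * x l) = ∑ k, ∑ l, A j k l * (y k * y l) := by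
  obtain ⟨B, hB0, hB, htr, hdet, hAB⟩ := exists_isHermitian_det_eq_zero_of_card_le_three A hι
  obtain ⟨c, x, y, hc, hx, hy, hxy, hBxy⟩ :=
    hB.exists_eq_smul_sub_of_trace_eq_zero_of_det_eq_zero htr hdet hB0
  refine ⟨x, y, hx, hy, hxy, fun j => ?_⟩
  have h : c * (∑ k, ∑ l, A j k l * (x k * x l) - ∑ k, ∑ l, A j k l * (y k * y l)) = 0 := by
    rw [← hAB j]
    simp only [hBxy, ← Finset.sum_sub_distrib, Finset.mul_sum]
    exact Finset.sum_congr rfl fun k _ => Finset.sum_congr rfl fun l _ => by ring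
  exact sub_eq_zero.mp ((mul_eq_zero.mp h).resolve_left hc)

end Constraints

theorem Matrix.IsHermitian.sum_conj_ofReal_mul_mul {n : Type*} [Fintype n] {S : Matrix n n ℂ}
    (hS : S.IsHermitian) (v : n → ℝ) :
    ∑ k, ∑ l, conj (v k : ℂ) * S k l * v l = ((∑ k, ∑ l, (S k l).re * (v k * v l) : ℝ) : ℂ) := by
  have him := hS.im_star_dotProduct_mulVec_self (fun k => (v k : ℂ))
  simp only [dotProduct, mulVec, Finset.mul_sum, Pi.star_apply, RCLike.star_def] at him
  apply Complex.ext
  · simp only [Complex.re_sum, Complex.ofReal_re, Complex.mul_re, Complex.conj_ofReal,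
      Complex.ofReal_im, mul_zero, sub_zero, zero_mul]
    exact Finset.sum_congr rfl fun _ _ => Finset.sum_congr rfl fun _ _ => by ring
  · simpa [Complex.im_sum, mul_assoc] using him

theorem Matrix.trace_of_ofReal_mul_mul {n : Type*} [Fintype n] (v : n → ℝ) (S : Matrix n n ℂ) :
    (of (fun k l => (v k : ℂ) * v l) * S).trace = ∑ k, ∑ l, conj (v k : ℂ) * S k l * v l := by
  simp only [trace, diag_apply, mul_apply, of_apply, Complex.conj_ofReal]
  rw [Finset.sum_comm]
  refine Finset.sum_congr rfl fun k _ => Finset.sum_congr rfl fun l _ => ?_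
  ring

theorem Matrix.eq_or_eq_neg_of_vecMulVec_self_eq {K n : Type*} [Field K] {v w : n → K}
    (h : vecMulVec v v = vecMulVec w w) : w = v ∨ w = -v := by
  have hvw (k l : n) : v k * v l = w k * w l := by simpa [vecMulVec_apply] using congr_fun₂ h k l
  by_cases hv : v = 0
  · subst hv
    left
    ext k
    simpa using (hvw k k).symm
  obtain ⟨k, hk⟩ := Function.ne_iff.mp hv
  rcases mul_self_eq_mul_self_iff.mp (hvw k k).symm with hw | hw
  · left
    ext l
    exact mul_left_cancel₀ hk (by rw [hvw, hw])
  · right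
    ext l
    refine mul_left_cancel₀ hk ?_
    rw [Pi.neg_apply, mul_neg, hvw, hw]
    ring

/-- Part of Cor. 14 of the paper: no collection of `3` selfadjoint operators is informationally
complete w.r.t. the pure states on `ℂ³` with real amplitudes. Concretely, for any triple of
selfadjoint matrices `S₁, S₂, S₃` there are real unit vectors `x ≠ ±y` whose quadratic forms
`⟨x, S_j x⟩` (viewing `x, y` as complex vectors with real entries) coincide; equivalently the
triple is not informationally complete w.r.t. the rank-one projections onto real unit
vectors. -/
theorem real_pure_states_not_ic_with_three (S : Fin 3 → Matrix (Fin 3) (Fin 3) ℂ)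
    (hS : ∀ j, (S j).IsHermitian) :
    (∃ x y : EuclideanSpace ℝ (Fin 3), ‖x‖ = 1 ∧ ‖y‖ = 1 ∧ y ≠ x ∧ y ≠ -x ∧
      ∀ j, ∑ k, ∑ l, (starRingEnd ℂ) ((x k : ℂ)) * S j k l * ((x l : ℂ)) =
           ∑ k, ∑ l, (starRingEnd ℂ) ((y k : ℂ)) * S j k l * ((y l : ℂ))) ∧
    ¬ IsIC S {ρ : Matrix (Fin 3) (Fin 3) ℂ |
        ∃ v : EuclideanSpace ℝ (Fin 3), ‖v‖ = 1 ∧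
          ρ = Matrix.of (fun k l => ((v k : ℂ)) * ((v l : ℂ)))} := by
  obtain ⟨x, y, hx, hy, hxy, hA⟩ :=
    exists_orthonormal_pair_sum_mul_eq (fun j => (S j).map Complex.re) (by simp)
  have hquad (j : Fin 3) : ∑ k, ∑ l, conj (x k : ℂ) * S j k l * x l =
      ∑ k, ∑ l, conj (y k : ℂ) * S j k l * y l := by
    rw [(hS j).sum_conj_ofReal_mul_mul, (hS j).sum_conj_ofReal_mul_mul]
    exact congrArg _ (hA j)
  have hyx : y ≠ x := fun h => by simp [h, hx] at hxy
  have hynx : y ≠ -x := fun h => by simp [h, hx] at hxy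
  refine ⟨⟨x, y, hx, hy, hyx, hynx, hquad⟩, fun hIC => ?_⟩
  have hρ := hIC _ ⟨x, hx, rfl⟩ _ ⟨y, hy, rfl⟩ fun j => by
    rw [trace_of_ofReal_mul_mul, trace_of_ofReal_mul_mul, hquad]
  rcases eq_or_eq_neg_of_vecMulVec_self_eq hρ with h | h
  · exact hyx (by ext k; exact Complex.ofReal_injective (by simpa using congr_fun h k))
  · exact hynx (by ext k; exact Complex.ofReal_injective (by simpa using congr_fun h k))
end

section
/- For every d ≥ 1: (a) there exists a POVM on ℂ^d with d² outcomes that is informationally complete with respect to the set of all states on ℂ^d; and (b) every POVM on ℂ^d that is informationally complete with respect to the set of all states has at least d² outcomes. -/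
/-!
Part (b): if a POVM `A` is informationally complete on states, it separates all positive
semidefinite matrices of equal trace (rescale them to states), hence all Hermitian matrices
(split `H = H⁺ - H⁻`; `tr H = 0` because `∑ A j = 1`), hence all matrices (real and imaginary
parts). So `M ↦ (tr (M * A j))ⱼ` is injective from the `d²`-dimensional space of matrices into
`ℂⁿ`, and `d² ≤ n`.

Part (a): the rank-one projections onto `e k`, `e k + e l` (`k < l`) and `e k + i e l` (`k > l`)
separate all matrices by polarization. Scaling them down so that their sum is `≤ 1` and adding
the remainder to one diagonal outcome gives a POVM with `d²` outcomes; the information lost on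
that outcome is recovered from the trace.
-/

open Matrix
open scoped ComplexOrder

open scoped MatrixOrder ComplexStarModule

theorem Matrix.PosSemidef.le_re_trace_smul_one {𝕜 m : Type*} [RCLike 𝕜] [Fintype m]
    [DecidableEq m] {A : Matrix m m 𝕜} (hA : A.PosSemidef) :
    A ≤ RCLike.re A.trace • (1 : Matrix m m 𝕜) := by
  rw [← Algebra.algebraMap_eq_smul_one]
  refine le_algebraMap_of_spectrum_le (fun x hx => ?_) hA.isHermitian.isSelfAdjoint
  obtain ⟨i, rfl⟩ := hA.isHermitian.spectrum_real_eq_range_eigenvalues ▸ hx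
  rw [hA.isHermitian.trace_eq_sum_eigenvalues, map_sum]
  simp only [RCLike.ofReal_re]
  exact Finset.single_le_sum (fun j _ => hA.eigenvalues_nonneg j) (Finset.mem_univ i)

theorem Matrix.trace_mul_vecMulVec_star {R m : Type*} [CommSemiring R] [StarRing R] [Fintype m]
    (M : Matrix m m R) (v : m → R) :
    (M * vecMulVec v (star v)).trace = star v ⬝ᵥ M *ᵥ v := by
  rw [mul_vecMulVec, trace_vecMulVec, dotProduct_comm]

section Measurement

variable {m ι : Type*} [Fintype m] [DecidableEq m]

noncomputable def measurementMap (A : ι → Matrix m m ℂ) : Matrix m m ℂ →ₗ[ℂ] ι → ℂ :=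
  LinearMap.pi fun j => traceLinearMap m ℂ ℂ ∘ₗ LinearMap.mulRight ℂ (A j)

@[simp]
theorem measurementMap_apply (A : ι → Matrix m m ℂ) (M : Matrix m m ℂ) (j : ι) :
    measurementMap A M j = (M * A j).trace :=
  rfl

theorem trace_eq_zero_of_measurementMap_eq_zero [Fintype ι] {A : ι → Matrix m m ℂ}
    (hA : ∑ j, A j = 1) {M : Matrix m m ℂ} (hM : measurementMap A M = 0) : M.trace = 0 :=
  calc M.trace = ∑ j, measurementMap A M j := by
        simp only [measurementMap_apply, ← trace_sum, ← Finset.mul_sum, hA, mul_one]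
    _ = 0 := by rw [hM]; simp

theorem measurementMap_star {A : ι → Matrix m m ℂ} (hA : ∀ j, (A j).IsHermitian)
    (M : Matrix m m ℂ) : measurementMap A (star M) = star (measurementMap A M) := by
  ext j
  rw [measurementMap_apply, Pi.star_apply, measurementMap_apply, star_eq_conjTranspose,
    ← (hA j).eq, ← conjTranspose_mul, trace_conjTranspose, trace_mul_comm, (hA j).eq]

end Measurement

section InformationalCompleteness

variable {d n : ℕ} {A : Fin n → Matrix (Fin d) (Fin d) ℂ}

theorem IsIC.of_injective_measurementMap (hinj : Function.Injective (measurementMap A))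
    (P : Set (Matrix (Fin d) (Fin d) ℂ)) : IsIC A P :=
  fun _ _ _ _ h => hinj (funext h)

theorem IsIC.eq_of_posSemidef (hIC : IsIC A {ρ | IsState ρ}) {P N : Matrix (Fin d) (Fin d) ℂ}
    (hP : P.PosSemidef) (hN : N.PosSemidef) (htr : P.trace = N.trace)
    (h : measurementMap A P = measurementMap A N) : P = N := by
  obtain ht | ht := eq_or_ne P.trace 0
  · rw [hP.trace_eq_zero_iff.mp ht, hN.trace_eq_zero_iff.mp (htr ▸ ht)]
  have hstate {Q : Matrix (Fin d) (Fin d) ℂ} (hQ : Q.PosSemidef) (hQt : Q.trace = P.trace) :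
      IsState (P.trace⁻¹ • Q) :=
    ⟨hQ.smul (inv_nonneg.mpr hP.trace_nonneg),
      by rw [trace_smul, hQt, smul_eq_mul, inv_mul_cancel₀ ht]⟩
  refine smul_right_injective _ (inv_ne_zero ht) <|
    hIC _ (hstate hP rfl) _ (hstate hN htr.symm) fun j => ?_
  simp only [smul_mul_assoc, trace_smul, ← measurementMap_apply, h]

theorem IsPOVM.eq_zero_of_isHermitian (hA : IsPOVM A) (hIC : IsIC A {ρ | IsState ρ})
    {H : Matrix (Fin d) (Fin d) ℂ} (hH : H.IsHermitian) (h : measurementMap A H = 0) :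
    H = 0 := by
  have hJordan : H⁺ - H⁻ = H := CFC.posPart_sub_negPart H hH.isSelfAdjoint
  have htr : H.trace = 0 := trace_eq_zero_of_measurementMap_eq_zero hA.2 h
  rw [← hJordan, map_sub, sub_eq_zero] at h
  rw [← hJordan, trace_sub, sub_eq_zero] at htr
  rw [← hJordan, sub_eq_zero]
  exact hIC.eq_of_posSemidef (nonneg_iff_posSemidef.mp (CFC.posPart_nonneg H))
    (nonneg_iff_posSemidef.mp (CFC.negPart_nonneg H)) htr h

theorem IsPOVM.injective_measurementMap (hA : IsPOVM A) (hIC : IsIC A {ρ | IsState ρ}) :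
    Function.Injective (measurementMap A) := by
  rw [← LinearMap.ker_eq_bot, LinearMap.ker_eq_bot']
  intro M hM
  have hM' : measurementMap A (star M) = 0 := by
    rw [measurementMap_star fun j => (hA.1 j).isHermitian, hM, star_zero]
  have hRe : measurementMap A (ℜ M) = 0 := by
    rw [realPart_apply_coe, LinearMap.map_smul_of_tower, map_add, hM, hM', add_zero, smul_zero]
  have hIm : measurementMap A (ℑ M) = 0 := by
    rw [imaginaryPart_apply_coe, map_smul, LinearMap.map_smul_of_tower, map_sub, hM, hM',
      sub_zero, smul_zero, smul_zero]
  rw [← realPart_add_I_smul_imaginaryPart M, hA.eq_zero_of_isHermitian hIC (ℜ M).2 hRe,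
    hA.eq_zero_of_isHermitian hIC (ℑ M).2 hIm, smul_zero, add_zero]

theorem IsPOVM.sq_le_of_isIC (hA : IsPOVM A) (hIC : IsIC A {ρ | IsState ρ}) : d ^ 2 ≤ n := by
  simpa [Module.finrank_matrix, sq] using
    LinearMap.finrank_le_finrank_of_injective (hA.injective_measurementMap hIC)

end InformationalCompleteness

section Completion

variable {d n : ℕ} (B : Fin n → Matrix (Fin d) (Fin d) ℂ)

/-- Any `c > 0` with `c • ∑ i, B i ≤ 1` would do; using `1 + tr` rather than `tr` avoids a case
split on `∑ i, B i = 0`. -/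
noncomputable def completionScale : ℝ := (1 + RCLike.re (∑ i, B i).trace)⁻¹

noncomputable def povmCompletion (i₀ : Fin n) : Fin n → Matrix (Fin d) (Fin d) ℂ :=
  fun i => completionScale B • B i +
    (Pi.single i₀ (1 - completionScale B • ∑ i, B i) : Fin n → Matrix (Fin d) (Fin d) ℂ) i

variable {B}

theorem re_trace_sum_nonneg (hB : ∀ i, (B i).PosSemidef) : 0 ≤ RCLike.re (∑ i, B i).trace :=
  (RCLike.nonneg_iff.mp (posSemidef_sum Finset.univ fun i _ => hB i).trace_nonneg).1

theorem completionScale_pos (hB : ∀ i, (B i).PosSemidef) : 0 < completionScale B := by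
  have := re_trace_sum_nonneg hB
  unfold completionScale
  positivity

theorem posSemidef_one_sub_completionScale_smul_sum (hB : ∀ i, (B i).PosSemidef) :
    (1 - completionScale B • ∑ i, B i).PosSemidef := by
  set S := ∑ i, B i
  set c := completionScale B
  have hc : c * (1 + RCLike.re S.trace) = 1 := by
    have := re_trace_sum_nonneg hB
    exact inv_mul_cancel₀ (by positivity)
  have hS : (RCLike.re S.trace • 1 - S).PosSemidef :=
    (posSemidef_sum Finset.univ fun i _ => hB i).le_re_trace_smul_one
  have : 1 - c • S = c • (1 + (RCLike.re S.trace • 1 - S)) := by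
    linear_combination (norm := module) -hc • (1 : Matrix (Fin d) (Fin d) ℂ)
  rw [this]
  exact (PosSemidef.one.add hS).smul (completionScale_pos hB).le

theorem isPOVM_povmCompletion (hB : ∀ i, (B i).PosSemidef) (i₀ : Fin n) :
    IsPOVM (povmCompletion B i₀) := by
  refine ⟨fun i => ((hB i).smul (completionScale_pos hB).le).add ?_, ?_⟩
  · rw [Pi.single_apply]
    split_ifs
    · exact posSemidef_one_sub_completionScale_smul_sum hB
    · exact PosSemidef.zero
  · simp only [povmCompletion, Finset.sum_add_distrib, ← Finset.smul_sum, Finset.sum_pi_single',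
      Finset.mem_univ, if_true, add_sub_cancel]

theorem trace_mul_eq_zero_of_measurementMap_povmCompletion (hB : ∀ i, (B i).PosSemidef)
    {i₀ : Fin n} {Δ : Matrix (Fin d) (Fin d) ℂ} (hΔ : measurementMap (povmCompletion B i₀) Δ = 0)
    {i : Fin n} (hi : i ≠ i₀) : (Δ * B i).trace = 0 := by
  have := congrFun hΔ i
  rw [measurementMap_apply, povmCompletion, Pi.single_eq_of_ne hi, add_zero, mul_smul_comm,
    trace_smul, Pi.zero_apply] at this
  exact (smul_eq_zero.mp this).resolve_left (completionScale_pos hB).ne'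

end Completion

section Probes

variable {d : ℕ}

noncomputable def probeCoeff (k l : Fin d) : ℂ :=
  if k = l then 0 else if k < l then 1 else Complex.I

noncomputable def probeVector (p : Fin d × Fin d) : Fin d → ℂ :=
  Pi.single p.1 1 + probeCoeff p.1 p.2 • Pi.single p.2 1

theorem star_probeVector_dotProduct_mulVec (Δ : Matrix (Fin d) (Fin d) ℂ) (k l : Fin d) :
    star (probeVector (k, l)) ⬝ᵥ Δ *ᵥ probeVector (k, l) =
      Δ k k + probeCoeff k l * Δ k l + star (probeCoeff k l) * Δ l k +
        star (probeCoeff k l) * probeCoeff k l * Δ l l := by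
  simp only [probeVector, mulVec_add, mulVec_smul, dotProduct_add, add_dotProduct, star_add,
    star_smul, dotProduct_smul, smul_dotProduct, mulVec_single_one, single_dotProduct,
    Pi.star_single, star_one, one_mul, smul_eq_mul, col_apply]
  ring

theorem star_probeVector_diag_dotProduct_mulVec (Δ : Matrix (Fin d) (Fin d) ℂ) (k : Fin d) :
    star (probeVector (k, k)) ⬝ᵥ Δ *ᵥ probeVector (k, k) = Δ k k := by
  simp [star_probeVector_dotProduct_mulVec, probeCoeff]

theorem eq_zero_of_forall_probeVector {Δ : Matrix (Fin d) (Fin d) ℂ}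
    (h : ∀ p, star (probeVector p) ⬝ᵥ Δ *ᵥ probeVector p = 0) : Δ = 0 := by
  have hdiag (k : Fin d) : Δ k k = 0 := star_probeVector_diag_dotProduct_mulVec Δ k ▸ h (k, k)
  have hoff {k l : Fin d} (hkl : k < l) : Δ k l = 0 ∧ Δ l k = 0 := by
    have hsum := h (k, l)
    have hdiff := h (l, k)
    simp only [star_probeVector_dotProduct_mulVec, hdiag, probeCoeff, hkl.ne, ↓reduceIte, hkl,
      one_mul, zero_add, star_one, mul_one, mul_zero, add_zero, hkl.ne', hkl.not_gt,
      RCLike.star_def, Complex.conj_I, neg_mul, Complex.I_mul_I, neg_neg] at hsum hdiff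
    constructor
    · linear_combination (hsum + Complex.I * hdiff) / 2 + (Δ k l - Δ l k) / 2 * Complex.I_sq
    · linear_combination (hsum - Complex.I * hdiff) / 2 + (Δ l k - Δ k l) / 2 * Complex.I_sq
  ext i j
  rcases lt_trichotomy i j with hij | rfl | hij
  · exact (hoff hij).1
  · exact hdiag i
  · exact (hoff hij).2

theorem eq_zero_of_trace_eq_zero_of_probeVector {Δ : Matrix (Fin d) (Fin d) ℂ} (k₀ : Fin d)
    (htr : Δ.trace = 0) (h : ∀ p ≠ (k₀, k₀), star (probeVector p) ⬝ᵥ Δ *ᵥ probeVector p = 0) :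
    Δ = 0 := by
  refine eq_zero_of_forall_probeVector fun p => ?_
  obtain rfl | hp := eq_or_ne p (k₀, k₀)
  · rw [star_probeVector_diag_dotProduct_mulVec, ← htr, trace, Finset.sum_eq_single k₀]
    · rfl
    · intro k _ hk
      rw [diag_apply, ← star_probeVector_diag_dotProduct_mulVec Δ k]
      exact h (k, k) fun hkk => hk (congrArg Prod.fst hkk)
    · exact fun h => absurd (Finset.mem_univ k₀) h
  · exact h p hp

end Probes

theorem exists_isPOVM_injective_measurementMap {d : ℕ} (k₀ : Fin d) :
    ∃ A : Fin (d ^ 2) → Matrix (Fin d) (Fin d) ℂ,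
      IsPOVM A ∧ Function.Injective (measurementMap A) := by
  let e : Fin (d ^ 2) ≃ Fin d × Fin d := (finCongr (sq d)).trans finProdFinEquiv.symm
  let B i := vecMulVec (probeVector (e i)) (star (probeVector (e i)))
  have hB i : (B i).PosSemidef := posSemidef_vecMulVec_self_star _
  have hA := isPOVM_povmCompletion hB (e.symm (k₀, k₀))
  refine ⟨_, hA, ?_⟩
  rw [← LinearMap.ker_eq_bot, LinearMap.ker_eq_bot']
  intro Δ hΔ
  refine eq_zero_of_trace_eq_zero_of_probeVector k₀
    (trace_eq_zero_of_measurementMap_eq_zero hA.2 hΔ) fun p hp => ?_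
  have := trace_mul_eq_zero_of_measurementMap_povmCompletion hB hΔ (i := e.symm p)
    (e.symm.injective.ne hp)
  simpa [B, trace_mul_vecMulVec_star] using this

/-- The classical fact recalled in Section 2 of the paper: on `ℂ^d` there is an informationally
complete POVM (w.r.t. all states) with `d²` outcomes, and every informationally complete POVM
has at least `d²` outcomes. -/
theorem ic_all_states_minimal (d : ℕ) (hd : 1 ≤ d) :
    (∃ A : Fin (d ^ 2) → Matrix (Fin d) (Fin d) ℂ,
        IsPOVM A ∧ IsIC A {ρ : Matrix (Fin d) (Fin d) ℂ | IsState ρ}) ∧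
    (∀ (n : ℕ) (A : Fin n → Matrix (Fin d) (Fin d) ℂ),
        IsPOVM A → IsIC A {ρ : Matrix (Fin d) (Fin d) ℂ | IsState ρ} → d ^ 2 ≤ n) := by
  obtain ⟨A, hA, hinj⟩ := exists_isPOVM_injective_measurementMap (⟨0, hd⟩ : Fin d)
  exact ⟨⟨A, hA, IsIC.of_injective_measurementMap hinj _⟩,
    fun _ _ hA hIC => hA.sq_le_of_isIC hIC⟩
end
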